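/- arXiv:1709.02297 — 5 statements merged into one kernel-verified Lean document; each statement's English description precedes it below -/
import Mathlib

section
/- Let i ∈ ℕ, K₀ a dyadic interval, and let f₁,...,f_i ∈ SL^∞ and g₁,...,g_i ∈ (SL^∞)* satisfy ∑_j ‖f_j‖_{SL^∞} ≤ 1 and ∑_j ‖g_j‖_{(SL^∞)*} ≤ |K₀|. Define ω(K) = ∑_{j=1}^{i} |⟨f_j, h_K⟩| + |⟨h_K, g_j⟩| for K ∈ 𝒟. Given τ > 0 and r ∈ ℕ₀ with 2^{−r} ≤ |K₀|, let 𝒢_k(K₀) = { K ∈ 𝒟_k : K ⊆ K₀, ω(K) ≤ τ|K| } for k ≥ r. Then for each ρ > 0 there exists an integer k with r ≤ k ≤ ⌊4/(ρ²τ²)⌋ + r such that |⋃ 𝒢_k(K₀)| ≥ (1−ρ)|K₀|. -/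
open MeasureTheory

/-- The dyadic interval `[j/2^k, (j+1)/2^k)`. -/
noncomputable def dyadicSet (k j : ℕ) : Set ℝ :=
  Set.Ico ((j : ℝ) / 2 ^ k) (((j : ℝ) + 1) / 2 ^ k)

/-- The `L^∞`-normalized Haar function supported on `[j/2^k, (j+1)/2^k)`. -/
noncomputable def haar (k j : ℕ) (x : ℝ) : ℝ :=
  if x ∈ Set.Ico ((j : ℝ) / 2 ^ k) (((j : ℝ) + 1 / 2) / 2 ^ k) then 1
  else if x ∈ Set.Ico (((j : ℝ) + 1 / 2) / 2 ^ k) (((j : ℝ) + 1) / 2 ^ k) then -1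
  else 0

/-- The `SL^∞` norm of a (formal) Haar series with coefficients `a k j` (for the dyadic
interval of level `k` and position `j`): the essential/pointwise supremum over `[0,1)` of the
square function. -/
noncomputable def slNorm (a : ℕ → ℕ → ℝ) : ENNReal :=
  ⨆ x ∈ Set.Ico (0 : ℝ) 1,
    (∑' k : ℕ, ∑ j ∈ Finset.range (2 ^ k),
      ENNReal.ofReal ((a k j) ^ 2 * (haar k j x) ^ 2)) ^ (1 / 2 : ℝ)

/-!
If at each of the `N` levels `r, …, r + N - 1` the good intervals covered less than
`(1 - ρ)|K₀|`, the bad intervals `K ⊆ K₀` at those levels would carry total weight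
`∑ ω(K) ≥ N τ ρ |K₀|`. On the other hand, writing `⟨f_j, h_K⟩ = a_K |K|`, the sum
`∑_K |⟨f_j, h_K⟩| = ∫_{K₀} ∑_K |a_K| 1_K` is bounded, by pointwise Cauchy–Schwarz against the
square function of `f_j`, by `‖f_j‖ √N |K₀|`, and
`∑_K |⟨h_K, g_j⟩|` is `g_j` tested on `∑_K ± h_K`, whose `SL^∞` norm is at most `√N` because
every point lies in at most one dyadic interval per level. Hence `N τ ρ ≤ 2 √N`, that is,
`N ≤ 4 / (ρ τ)²`.
-/

open Finset
open scoped ENNReal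

lemma measurableSet_dyadicSet (k l : ℕ) : MeasurableSet (dyadicSet k l) := measurableSet_Ico

lemma volume_dyadicSet (k l : ℕ) : volume (dyadicSet k l) = ENNReal.ofReal ((2 : ℝ) ^ k)⁻¹ := by
  rw [dyadicSet, Real.volume_Ico, ← sub_div, add_sub_cancel_left, one_div]

lemma volume_real_dyadicSet (k l : ℕ) : volume.real (dyadicSet k l) = ((2 : ℝ) ^ k)⁻¹ := by
  rw [measureReal_def, volume_dyadicSet, ENNReal.toReal_ofReal (by positivity)]

lemma pairwise_disjoint_dyadicSet (k : ℕ) : Pairwise (Function.onFun Disjoint (dyadicSet k)) := by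
  have hmono : Monotone fun l : ℕ => (l : ℝ) / 2 ^ k := fun a b h => by
    dsimp only; gcongr
  have h := hmono.pairwise_disjoint_on_Ico_succ
  simp only [Order.succ_eq_add_one, Nat.cast_add_one] at h
  exact h

lemma eq_of_mem_dyadicSet {k l l' : ℕ} {x : ℝ} (h : x ∈ dyadicSet k l) (h' : x ∈ dyadicSet k l') :
    l = l' := by
  by_contra hne
  exact Set.disjoint_left.1 (pairwise_disjoint_dyadicSet k hne) h h'

lemma volume_biUnion_dyadicSet (k : ℕ) (s : Finset ℕ) :
    volume (⋃ l ∈ s, dyadicSet k l) = ENNReal.ofReal (#s * ((2 : ℝ) ^ k)⁻¹) := by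
  rw [measure_biUnion_finset (fun _ _ _ _ h => pairwise_disjoint_dyadicSet k h)
    (fun l _ => measurableSet_dyadicSet k l)]
  simp_rw [volume_dyadicSet]
  rw [← ENNReal.ofReal_sum_of_nonneg (fun _ _ => by positivity), sum_const, nsmul_eq_mul]

lemma haar_sq (k l : ℕ) (x : ℝ) : haar k l x ^ 2 = (dyadicSet k l).indicator 1 x := by
  have hmid : ((l : ℝ) + 1 / 2) / 2 ^ k < ((l : ℝ) + 1) / 2 ^ k := by gcongr; norm_num
  have hlow : (l : ℝ) / 2 ^ k < ((l : ℝ) + 1 / 2) / 2 ^ k := by gcongr; norm_num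
  unfold haar dyadicSet Set.indicator
  simp only [Set.mem_Ico, Pi.one_apply]
  split_ifs <;> norm_num <;> grind

def dyadicChildren (n l k : ℕ) : Finset ℕ := Ico (l * 2 ^ (k - n)) ((l + 1) * 2 ^ (k - n))

lemma card_dyadicChildren (n l k : ℕ) : #(dyadicChildren n l k) = 2 ^ (k - n) := by
  simp [dyadicChildren, add_mul]

lemma dyadicSet_subset_dyadicSet_iff {n k : ℕ} (hk : n ≤ k) (l l' : ℕ) :
    dyadicSet k l' ⊆ dyadicSet n l ↔ l' ∈ dyadicChildren n l k := by
  obtain ⟨m, rfl⟩ := Nat.exists_eq_add_of_le hk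
  have hrescale (a : ℕ) : (a : ℝ) / 2 ^ n = ((a * 2 ^ m : ℕ) : ℝ) / 2 ^ (n + m) := by
    push_cast; rw [pow_add]; field_simp
  have hl := hrescale l
  have hl1 := hrescale (l + 1)
  push_cast at hl hl1
  rw [dyadicSet, dyadicSet, hl, hl1, Set.Ico_subset_Ico_iff (by gcongr; linarith),
    dyadicChildren, Nat.add_sub_cancel_left, mem_Ico, Nat.lt_iff_add_one_le]
  simp only [div_le_div_iff_of_pos_right (by positivity : (0 : ℝ) < 2 ^ (n + m))]
  norm_cast

lemma dyadicSet_subset_Ico_zero_one_iff (k l : ℕ) : dyadicSet k l ⊆ Set.Ico 0 1 ↔ l < 2 ^ k := by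
  have hroot : dyadicSet 0 0 = Set.Ico 0 1 := by simp [dyadicSet]
  rw [← hroot, dyadicSet_subset_dyadicSet_iff (Nat.zero_le k)]
  simp [dyadicChildren]

lemma sum_indicator_dyadicSet_le_card (S : Finset ℕ) {P : Finset (ℕ × ℕ)}
    (hPS : ∀ p ∈ P, p.1 ∈ S) (x : ℝ) :
    ∑ p ∈ P, (dyadicSet p.1 p.2).indicator (1 : ℝ → ℝ) x ≤ #S := by
  classical
  have hcount : ∑ p ∈ P, (dyadicSet p.1 p.2).indicator (1 : ℝ → ℝ) x =
      #{p ∈ P | x ∈ dyadicSet p.1 p.2} := by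
    simp [Set.indicator_apply]
  rw [hcount, Nat.cast_le]
  refine card_le_card_of_injOn Prod.fst (fun p hp => hPS p (mem_filter.1 hp).1) ?_
  intro p hp q hq hpq
  have hxp := (mem_filter.1 hp).2
  rw [show p.1 = q.1 from hpq] at hxp
  exact Prod.ext hpq (eq_of_mem_dyadicSet hxp (mem_filter.1 hq).2)

def levelPairs (S : Finset ℕ) (t : ℕ → Finset ℕ) : Finset (ℕ × ℕ) :=
  S.biUnion fun k => (t k).image (Prod.mk k)

lemma mem_levelPairs {S : Finset ℕ} {t : ℕ → Finset ℕ} {p : ℕ × ℕ} :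
    p ∈ levelPairs S t ↔ p.1 ∈ S ∧ p.2 ∈ t p.1 := by
  simp only [levelPairs, mem_biUnion, mem_image]
  constructor
  · rintro ⟨k, hk, l, hl, rfl⟩
    exact ⟨hk, hl⟩
  · rintro ⟨hk, hl⟩
    exact ⟨p.1, hk, p.2, hl, rfl⟩

lemma sum_levelPairs {M : Type*} [AddCommMonoid M] (S : Finset ℕ) (t : ℕ → Finset ℕ)
    (f : ℕ → ℕ → M) : ∑ p ∈ levelPairs S t, f p.1 p.2 = ∑ k ∈ S, ∑ l ∈ t k, f k l :=
  sum_finset_product' _ _ _ fun _ => mem_levelPairs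

noncomputable def squareFunctionSq (a : ℕ → ℕ → ℝ) (x : ℝ) : ℝ≥0∞ :=
  ∑' k : ℕ, ∑ j ∈ range (2 ^ k), ENNReal.ofReal (a k j ^ 2 * haar k j x ^ 2)

lemma squareFunctionSq_le_slNorm_sq (a : ℕ → ℕ → ℝ) {x : ℝ} (hx : x ∈ Set.Ico 0 1) :
    squareFunctionSq a x ≤ slNorm a ^ 2 := by
  have h : squareFunctionSq a x ^ (1 / 2 : ℝ) ≤ slNorm a :=
    le_iSup₂ (f := fun x (_ : x ∈ Set.Ico (0 : ℝ) 1) => squareFunctionSq a x ^ (1 / 2 : ℝ)) x hx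
  calc squareFunctionSq a x = (squareFunctionSq a x ^ (1 / 2 : ℝ)) ^ (2 : ℝ) := by
        rw [← ENNReal.rpow_mul]; norm_num
    _ ≤ slNorm a ^ (2 : ℝ) := by gcongr
    _ = slNorm a ^ 2 := ENNReal.rpow_two _

lemma sum_le_squareFunctionSq (a : ℕ → ℕ → ℝ) {P : Finset (ℕ × ℕ)}
    (hP : ∀ p ∈ P, p.2 < 2 ^ p.1) (x : ℝ) :
    ∑ p ∈ P, ENNReal.ofReal (a p.1 p.2 ^ 2 * haar p.1 p.2 x ^ 2) ≤ squareFunctionSq a x :=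
  calc _ ≤ ∑ p ∈ levelPairs (P.image Prod.fst) (fun k => range (2 ^ k)),
          ENNReal.ofReal (a p.1 p.2 ^ 2 * haar p.1 p.2 x ^ 2) :=
        sum_le_sum_of_subset fun p hp =>
          mem_levelPairs.2 ⟨mem_image_of_mem _ hp, mem_range.2 (hP p hp)⟩
    _ = ∑ k ∈ P.image Prod.fst, ∑ j ∈ range (2 ^ k),
          ENNReal.ofReal (a k j ^ 2 * haar k j x ^ 2) :=
        sum_levelPairs _ _ fun k j => ENNReal.ofReal (a k j ^ 2 * haar k j x ^ 2)
    _ ≤ squareFunctionSq a x := ENNReal.sum_le_tsum _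

lemma squareFunctionSq_le_card (b : ℕ → ℕ → ℝ) (S : Finset ℕ) (hS : ∀ k l, b k l ≠ 0 → k ∈ S)
    (hb : ∀ k l, |b k l| ≤ 1) (x : ℝ) : squareFunctionSq b x ≤ #S := by
  have hvanish : ∀ k ∉ S, ∑ j ∈ range (2 ^ k), ENNReal.ofReal (b k j ^ 2 * haar k j x ^ 2) = 0 :=
    fun k hk => sum_eq_zero fun j _ => by
      rw [show b k j = 0 from by_contra fun h => hk (hS k j h)]; simp
  rw [squareFunctionSq, tsum_eq_sum hvanish,
    ← sum_levelPairs S (fun k => range (2 ^ k)) fun k j =>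
      ENNReal.ofReal (b k j ^ 2 * haar k j x ^ 2),
    ← ENNReal.ofReal_sum_of_nonneg fun _ _ => by positivity, ← ENNReal.ofReal_natCast]
  refine ENNReal.ofReal_le_ofReal ((sum_le_sum fun p _ => ?_).trans
    (sum_indicator_dyadicSet_le_card S (fun p hp => (mem_levelPairs.1 hp).1) x))
  rw [haar_sq]
  exact mul_le_of_le_one_left (Set.indicator_nonneg (fun _ _ => zero_le_one) _)
    ((sq_le_one_iff_abs_le_one _).2 (hb _ _))

lemma slNorm_toReal_le_sqrt_card (b : ℕ → ℕ → ℝ) (S : Finset ℕ)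
    (hS : ∀ k l, b k l ≠ 0 → k ∈ S) (hb : ∀ k l, |b k l| ≤ 1) : (slNorm b).toReal ≤ √(#S : ℝ) := by
  have h : slNorm b ≤ (#S : ℝ≥0∞) ^ (1 / 2 : ℝ) :=
    iSup₂_le fun x _ => ENNReal.rpow_le_rpow (squareFunctionSq_le_card b S hS hb x) (by norm_num)
  calc (slNorm b).toReal ≤ ((#S : ℝ≥0∞) ^ (1 / 2 : ℝ)).toReal :=
        ENNReal.toReal_mono (by simp) h
    _ = √(#S : ℝ) := by rw [← ENNReal.toReal_rpow, ENNReal.toReal_natCast, Real.sqrt_eq_rpow]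

lemma sum_mul_measureReal_le_of_sum_indicator_le {α ι : Type*} [MeasurableSpace α]
    {μ : Measure α} {E : Set α} (hE : MeasurableSet E) (hμE : μ E ≠ ⊤) {s : Finset ι}
    {K : ι → Set α} (hK : ∀ i ∈ s, MeasurableSet (K i)) (hKE : ∀ i ∈ s, K i ⊆ E)
    {c : ι → ℝ} {C : ℝ} (h : ∀ x ∈ E, ∑ i ∈ s, c i * (K i).indicator 1 x ≤ C) :
    ∑ i ∈ s, c i * μ.real (K i) ≤ C * μ.real E := by
  have hint : ∀ i ∈ s, IntegrableOn (fun x => c i * (K i).indicator 1 x) E μ := fun i hi => by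
    have h1 : IntegrableOn ((K i).indicator fun _ => (1 : ℝ)) E μ :=
      (integrableOn_const hμE).indicator (hK i hi)
    exact h1.const_mul (c i)
  calc ∑ i ∈ s, c i * μ.real (K i) = ∫ x in E, ∑ i ∈ s, c i * (K i).indicator 1 x ∂μ := by
        rw [integral_finsetSum s hint]
        refine sum_congr rfl fun i hi => ?_
        rw [integral_const_mul, integral_indicator_one (hK i hi),
          measureReal_restrict_apply (hK i hi), Set.inter_eq_left.2 (hKE i hi)]
    _ ≤ ∫ _ in E, C ∂μ :=
        setIntegral_mono_on (integrable_finsetSum s hint) (integrableOn_const hμE) hE h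
    _ = C * μ.real E := by rw [setIntegral_const, smul_eq_mul, mul_comm]

lemma sum_abs_mul_indicator_le_slNorm_mul_sqrt {a : ℕ → ℕ → ℝ} (ha : slNorm a ≠ ⊤)
    {S : Finset ℕ} {P : Finset (ℕ × ℕ)} (hP : ∀ p ∈ P, p.1 ∈ S ∧ p.2 < 2 ^ p.1) {x : ℝ}
    (hx : x ∈ Set.Ico 0 1) :
    ∑ p ∈ P, |a p.1 p.2| * (dyadicSet p.1 p.2).indicator 1 x ≤ (slNorm a).toReal * √(#S : ℝ) := by
  set χ := fun p : ℕ × ℕ => (dyadicSet p.1 p.2).indicator (1 : ℝ → ℝ) x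
  have hχ : ∀ p, χ p ^ 2 = χ p := fun p => by
    by_cases h : x ∈ dyadicSet p.1 p.2 <;> simp [χ, h]
  have hsq : ∑ p ∈ P, a p.1 p.2 ^ 2 * χ p ≤ (slNorm a).toReal ^ 2 := by
    rw [← ENNReal.toReal_pow, ← ENNReal.ofReal_le_iff_le_toReal (ENNReal.pow_ne_top ha)]
    simp_rw [χ, ← haar_sq]
    rw [ENNReal.ofReal_sum_of_nonneg fun p _ => by positivity]
    exact (sum_le_squareFunctionSq a (fun p hp => (hP p hp).2) x).trans
      (squareFunctionSq_le_slNorm_sq a hx)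
  calc ∑ p ∈ P, |a p.1 p.2| * χ p = ∑ p ∈ P, (|a p.1 p.2| * χ p) * χ p := by
        simp_rw [mul_assoc, ← sq, hχ]
    _ ≤ √(∑ p ∈ P, (|a p.1 p.2| * χ p) ^ 2) * √(∑ p ∈ P, χ p ^ 2) :=
        Real.sum_mul_le_sqrt_mul_sqrt _ _ _
    _ = √(∑ p ∈ P, a p.1 p.2 ^ 2 * χ p) * √(∑ p ∈ P, χ p) := by simp_rw [mul_pow, sq_abs, hχ]
    _ ≤ √((slNorm a).toReal ^ 2) * √(#S : ℝ) := by
        gcongr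
        exact sum_indicator_dyadicSet_le_card S (fun p hp => (hP p hp).1) x
    _ = (slNorm a).toReal * √(#S : ℝ) := by rw [Real.sqrt_sq ENNReal.toReal_nonneg]

lemma sum_abs_mul_inv_two_pow_le {a : ℕ → ℕ → ℝ} (ha : slNorm a ≠ ⊤) {E : Set ℝ}
    (hE : MeasurableSet E) (hE1 : E ⊆ Set.Ico 0 1) {S : Finset ℕ} {P : Finset (ℕ × ℕ)}
    (hP : ∀ p ∈ P, p.1 ∈ S ∧ dyadicSet p.1 p.2 ⊆ E) :
    ∑ p ∈ P, |a p.1 p.2| * ((2 : ℝ) ^ p.1)⁻¹ ≤ (slNorm a).toReal * √(#S : ℝ) * volume.real E := by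
  have hP' : ∀ p ∈ P, p.1 ∈ S ∧ p.2 < 2 ^ p.1 := fun p hp =>
    ⟨(hP p hp).1, (dyadicSet_subset_Ico_zero_one_iff _ _).1 ((hP p hp).2.trans hE1)⟩
  calc ∑ p ∈ P, |a p.1 p.2| * ((2 : ℝ) ^ p.1)⁻¹
      = ∑ p ∈ P, |a p.1 p.2| * volume.real (dyadicSet p.1 p.2) := by
        simp_rw [volume_real_dyadicSet]
    _ ≤ _ := sum_mul_measureReal_le_of_sum_indicator_le hE
        (measure_ne_top_of_subset hE1 measure_Ico_lt_top.ne)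
        (fun p _ => measurableSet_dyadicSet _ _) (fun p hp => (hP p hp).2)
        fun x hx => sum_abs_mul_indicator_le_slNorm_mul_sqrt ha hP' (hE1 hx)

lemma sum_abs_le_mul_sqrt_card {d : ℕ → ℕ → ℝ} {G : ℝ} (hG : 0 ≤ G)
    (hg : ∀ s : Finset (ℕ × ℕ), (∀ p ∈ s, p.2 < 2 ^ p.1) → ∀ u : ℕ × ℕ → ℝ,
      |∑ p ∈ s, u p * d p.1 p.2| ≤
        G * (slNorm fun k l => if (k, l) ∈ s then u (k, l) else 0).toReal)
    {S : Finset ℕ} {P : Finset (ℕ × ℕ)} (hP : ∀ p ∈ P, p.1 ∈ S ∧ p.2 < 2 ^ p.1) :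
    ∑ p ∈ P, |d p.1 p.2| ≤ G * √(#S : ℝ) := by
  set u : ℕ × ℕ → ℝ := fun p => SignType.sign (d p.1 p.2)
  have hu : ∀ p, |u p| ≤ 1 := fun p => by
    rcases lt_trichotomy (d p.1 p.2) 0 with h | h | h <;> simp [u, h]
  calc ∑ p ∈ P, |d p.1 p.2| = |∑ p ∈ P, u p * d p.1 p.2| := by
        simp_rw [u, sign_mul_self]
        exact (abs_of_nonneg (sum_nonneg fun _ _ => abs_nonneg _)).symm
    _ ≤ G * (slNorm fun k l => if (k, l) ∈ P then u (k, l) else 0).toReal :=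
        hg P (fun p hp => (hP p hp).2) u
    _ ≤ G * √(#S : ℝ) := by
        refine mul_le_mul_of_nonneg_left (slNorm_toReal_le_sqrt_card _ S (fun k l hkl => ?_)
          fun k l => ?_) hG
        · by_contra hk
          exact hkl (if_neg fun hmem => hk (hP _ hmem).1)
        · split_ifs
          · exact hu _
          · simp

lemma sum_weight_le_sqrt_card_mul {i : ℕ} {f : Fin i → ℕ → ℕ → ℝ} (hf : ∑ j, slNorm (f j) ≤ 1)
    {d : Fin i → ℕ → ℕ → ℝ} {G : Fin i → ℝ} (hGpos : ∀ j, 0 ≤ G j)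
    (hg : ∀ (j : Fin i) (s : Finset (ℕ × ℕ)), (∀ p ∈ s, p.2 < 2 ^ p.1) →
      ∀ u : ℕ × ℕ → ℝ,
        |∑ p ∈ s, u p * d j p.1 p.2| ≤
          G j * (slNorm (fun k l => if (k, l) ∈ s then u (k, l) else 0)).toReal)
    {E : Set ℝ} (hE : MeasurableSet E) (hE1 : E ⊆ Set.Ico 0 1) {S : Finset ℕ}
    {P : Finset (ℕ × ℕ)} (hP : ∀ p ∈ P, p.1 ∈ S ∧ dyadicSet p.1 p.2 ⊆ E) :
    ∑ p ∈ P, ∑ j, (|f j p.1 p.2| * ((2 : ℝ) ^ p.1)⁻¹ + |d j p.1 p.2|) ≤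
      √(#S : ℝ) * (volume.real E + ∑ j, G j) := by
  have hfin : ∀ j, slNorm (f j) ≠ ⊤ := fun j =>
    ne_top_of_le_ne_top ENNReal.one_ne_top
      ((single_le_sum (fun _ _ => zero_le) (mem_univ j)).trans hf)
  have hfR : ∑ j, (slNorm (f j)).toReal ≤ 1 := by
    rw [← ENNReal.toReal_sum fun j _ => hfin j]
    exact ENNReal.toReal_le_of_le_ofReal zero_le_one (hf.trans ENNReal.ofReal_one.ge)
  have hP' : ∀ p ∈ P, p.1 ∈ S ∧ p.2 < 2 ^ p.1 := fun p hp =>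
    ⟨(hP p hp).1, (dyadicSet_subset_Ico_zero_one_iff _ _).1 ((hP p hp).2.trans hE1)⟩
  rw [sum_comm]
  simp_rw [sum_add_distrib]
  calc _ ≤ ∑ j, (slNorm (f j)).toReal * √(#S : ℝ) * volume.real E + ∑ j, G j * √(#S : ℝ) :=
        add_le_add (sum_le_sum fun j _ => sum_abs_mul_inv_two_pow_le (hfin j) hE hE1 hP)
          (sum_le_sum fun j _ => sum_abs_le_mul_sqrt_card (hGpos j) (hg j) hP')
    _ = (∑ j, (slNorm (f j)).toReal) * (√(#S : ℝ) * volume.real E) +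
          (∑ j, G j) * √(#S : ℝ) := by
        simp_rw [sum_mul, mul_assoc]
    _ ≤ 1 * (√(#S : ℝ) * volume.real E) + (∑ j, G j) * √(#S : ℝ) := by gcongr
    _ = √(#S : ℝ) * (volume.real E + ∑ j, G j) := by ring

lemma mul_le_sum_filter_of_volume_lt {n l₀ k : ℕ} (hk : n ≤ k) (hl₀ : l₀ < 2 ^ n)
    {ω : ℕ → ℝ} {τ ρ : ℝ} (hτ : 0 ≤ τ)
    (h : volume (⋃ l ∈ {l : ℕ | l < 2 ^ k ∧ dyadicSet k l ⊆ dyadicSet n l₀ ∧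
        ω l ≤ τ * ((2 : ℝ) ^ k)⁻¹}, dyadicSet k l) <
      ENNReal.ofReal ((1 - ρ) * ((2 : ℝ) ^ n)⁻¹)) :
    τ * ρ * ((2 : ℝ) ^ n)⁻¹ ≤
      ∑ l ∈ dyadicChildren n l₀ k with τ * ((2 : ℝ) ^ k)⁻¹ < ω l, ω l := by
  set good := {l ∈ dyadicChildren n l₀ k | ω l ≤ τ * ((2 : ℝ) ^ k)⁻¹}
  set bad := {l ∈ dyadicChildren n l₀ k | τ * ((2 : ℝ) ^ k)⁻¹ < ω l}
  have hgood : {l : ℕ | l < 2 ^ k ∧ dyadicSet k l ⊆ dyadicSet n l₀ ∧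
      ω l ≤ τ * ((2 : ℝ) ^ k)⁻¹} = ↑good := by
    ext l
    simp only [Set.mem_ofPred_eq, coe_filter, good, ← dyadicSet_subset_dyadicSet_iff hk]
    refine ⟨fun hl => hl.2, fun hl => ⟨?_, hl⟩⟩
    exact (dyadicSet_subset_Ico_zero_one_iff k l).1
      (hl.1.trans ((dyadicSet_subset_Ico_zero_one_iff n l₀).2 hl₀))
  rw [hgood, set_biUnion_coe, volume_biUnion_dyadicSet, ENNReal.ofReal_lt_ofReal_iff'] at h
  have hcard : (#good : ℝ) + #bad = 2 ^ (k - n) := by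
    have h' := card_filter_add_card_filter_not (s := dyadicChildren n l₀ k)
      fun l => ω l ≤ τ * ((2 : ℝ) ^ k)⁻¹
    simp only [not_le, card_dyadicChildren] at h'
    have h'' : #good + #bad = 2 ^ (k - n) := h'
    exact_mod_cast h''
  have hscale : ((#good : ℝ) + #bad) * ((2 : ℝ) ^ k)⁻¹ = ((2 : ℝ) ^ n)⁻¹ := by
    rw [hcard, pow_sub₀ _ two_ne_zero hk]
    field_simp
  have hbad : ρ * ((2 : ℝ) ^ n)⁻¹ < #bad * ((2 : ℝ) ^ k)⁻¹ := by linarith [h.1]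
  calc τ * ρ * ((2 : ℝ) ^ n)⁻¹ ≤ τ * (#bad * ((2 : ℝ) ^ k)⁻¹) := by
        rw [mul_assoc]; exact mul_le_mul_of_nonneg_left hbad.le hτ
    _ = ∑ _l ∈ bad, τ * ((2 : ℝ) ^ k)⁻¹ := by rw [sum_const, nsmul_eq_mul]; ring
    _ ≤ ∑ l ∈ bad, ω l := sum_le_sum fun l hl => (mem_filter.1 hl).2.le

lemma natCast_le_four_div_sq_of_mul_le_two_sqrt {N : ℕ} {c : ℝ} (hc : 0 < c)
    (h : N * c ≤ 2 * √(N : ℝ)) : (N : ℝ) ≤ 4 / c ^ 2 := by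
  rcases Nat.eq_zero_or_pos N with rfl | hN
  · simp only [Nat.cast_zero]; positivity
  have hN' : (0 : ℝ) < N := by exact_mod_cast hN
  have hsq := pow_le_pow_left₀ (by positivity) h 2
  rw [mul_pow, mul_pow, Real.sq_sqrt hN'.le] at hsq
  rw [le_div_iff₀ (by positivity)]
  nlinarith

/-- The combinatorial lemma (Lemma 2.5/`lem:comb-1`): given `f_1,…,f_i ∈ SL^∞` (represented by
their Haar coefficients) with `∑ ‖f_j‖_{SL^∞} ≤ 1` and functionals `g_1,…,g_i ∈ (SL^∞)^*`
(represented by their actions `d j` on the Haar functions, with norm bounds `G j`) with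
`∑ ‖g_j‖ ≤ |K₀|`, for the local frequency weight
`ω(K) = ∑_j |⟨f_j, h_K⟩| + |⟨h_K, g_j⟩|`, for every `ρ > 0` there is a level `k` with
`r ≤ k ≤ ⌊4/(ρ²τ²)⌋ + r` such that the intervals `K ∈ 𝒟_k` with `K ⊆ K₀` and
`ω(K) ≤ τ|K|` cover at least `(1-ρ)|K₀|`. -/
theorem comb_lemma_one (i : ℕ) (n₀ l₀ : ℕ) (hK₀ : l₀ < 2 ^ n₀)
    (f : Fin i → ℕ → ℕ → ℝ)
    (hf : ∑ j, slNorm (f j) ≤ 1)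
    (d : Fin i → ℕ → ℕ → ℝ) (G : Fin i → ℝ) (hGpos : ∀ j, 0 ≤ G j)
    (hg : ∀ (j : Fin i) (s : Finset (ℕ × ℕ)), (∀ p ∈ s, p.2 < 2 ^ p.1) →
      ∀ u : ℕ × ℕ → ℝ,
        |∑ p ∈ s, u p * d j p.1 p.2| ≤
          G j * (slNorm (fun k l => if (k, l) ∈ s then u (k, l) else 0)).toReal)
    (hG : ∑ j, G j ≤ ((2 : ℝ) ^ n₀)⁻¹)
    (τ : ℝ) (hτ : 0 < τ) (r : ℕ) (hr : ((2 : ℝ) ^ r)⁻¹ ≤ ((2 : ℝ) ^ n₀)⁻¹)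
    (ρ : ℝ) (hρ : 0 < ρ) :
    ∃ k : ℕ, r ≤ k ∧ k ≤ Nat.floor (4 / (ρ ^ 2 * τ ^ 2)) + r ∧
      ENNReal.ofReal ((1 - ρ) * ((2 : ℝ) ^ n₀)⁻¹) ≤
        volume (⋃ l ∈ {l : ℕ | l < 2 ^ k ∧ dyadicSet k l ⊆ dyadicSet n₀ l₀ ∧
          (∑ j, (|f j k l| * ((2 : ℝ) ^ k)⁻¹ + |d j k l|)) ≤ τ * ((2 : ℝ) ^ k)⁻¹},
          dyadicSet k l) := by
  by_contra hcon
  push Not at hcon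
  have hn₀r : n₀ ≤ r :=
    (pow_le_pow_iff_right₀ one_lt_two).1 ((inv_le_inv₀ (by positivity) (by positivity)).1 hr)
  set N := ⌊4 / (ρ ^ 2 * τ ^ 2)⌋₊ + 1
  set ω : ℕ → ℕ → ℝ := fun k l => ∑ j, (|f j k l| * ((2 : ℝ) ^ k)⁻¹ + |d j k l|)
  set bad := levelPairs (Ico r (r + N))
    fun k => {l ∈ dyadicChildren n₀ l₀ k | τ * ((2 : ℝ) ^ k)⁻¹ < ω k l}
  have hlower : N * (τ * ρ * ((2 : ℝ) ^ n₀)⁻¹) ≤ ∑ p ∈ bad, ω p.1 p.2 := by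
    have h := card_nsmul_le_sum (Ico r (r + N)) _ (τ * ρ * ((2 : ℝ) ^ n₀)⁻¹) fun k hk =>
      mul_le_sum_filter_of_volume_lt (hn₀r.trans (mem_Ico.1 hk).1) hK₀ hτ.le
        (hcon k (mem_Ico.1 hk).1 (by have := (mem_Ico.1 hk).2; omega))
    rw [sum_levelPairs]
    simpa using h
  have hupper : ∑ p ∈ bad, ω p.1 p.2 ≤ √(N : ℝ) * (2 * ((2 : ℝ) ^ n₀)⁻¹) := by
    have h := sum_weight_le_sqrt_card_mul hf hGpos hg (measurableSet_dyadicSet n₀ l₀)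
      ((dyadicSet_subset_Ico_zero_one_iff _ _).2 hK₀) (S := Ico r (r + N)) (P := bad) fun p hp => by
        obtain ⟨hk, hl⟩ := mem_levelPairs.1 hp
        exact ⟨hk, (dyadicSet_subset_dyadicSet_iff (hn₀r.trans (mem_Ico.1 hk).1) _ _).2
          (mem_filter.1 hl).1⟩
    rw [volume_real_dyadicSet, Nat.card_Ico, Nat.add_sub_cancel_left] at h
    exact h.trans (by gcongr; linarith)
  have hN_le : (N : ℝ) ≤ 4 / (ρ * τ) ^ 2 := by
    refine natCast_le_four_div_sq_of_mul_le_two_sqrt (mul_pos hρ hτ)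
      (le_of_mul_le_mul_right ?_ (by positivity : (0 : ℝ) < ((2 : ℝ) ^ n₀)⁻¹))
    linarith [hlower.trans hupper]
  have : N ≤ ⌊4 / (ρ ^ 2 * τ ^ 2)⌋₊ := Nat.le_floor (by rwa [mul_pow] at hN_le)
  omega
end

section
/- Let 𝒩 be a collection of nested measurable sets of finite positive measure, k ∈ ℕ, and ρ > 0. If 𝒳 ⊆ 𝒩 has Carleson constant ⟦𝒳⟧ > k/ρ, then there exists N₀ ∈ 𝒩 such that for every 0 ≤ ℓ ≤ k, the ℓ-th generation of {N ∈ 𝒳 : N ⊆ N₀} has point-set of measure greater than (1−ρ)|N₀|. -/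
/-!
Argue by contradiction: suppose every `N ∈ 𝒳` has a generation `ℓ(N) ∈ [1, k]` below it whose
point-set has measure at most `(1 - ρ)|N|` (generation `0` is `{N}` itself, so `ℓ(N) ≠ 0`).
The `j`-th generation below `N` is the set of members with exactly `j` ancestors below `N`, so
its members are disjoint and generations `ℓ + i` below `N` are generations `i` below the
members of generation `ℓ`. Hence the partial sums `S_d(N)` of the first `d` generation measures
satisfy `S_d(N) ≤ ℓ|N| + ∑_{M ∈ 𝒢_ℓ} S_{d-ℓ}(M)`, and by strong induction on `d`,
`S_d(N) ≤ k|N| + (k/ρ)(1 - ρ)|N| = (k/ρ)|N|`. Letting `d → ∞` bounds the Carleson sum below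
`N` by `(k/ρ)|N|`.
-/

open MeasureTheory

/-- A collection of sets is nested if any two intersecting members are comparable. -/
def Nested (X : Set (Set ℝ)) : Prop :=
  ∀ M ∈ X, ∀ N ∈ X, (M ∩ N).Nonempty → M ⊆ N ∨ N ⊆ M

/-- The maximal elements of a collection of sets. -/
def maxEls (X : Set (Set ℝ)) : Set (Set ℝ) :=
  {N | N ∈ X ∧ ∀ M ∈ X, ¬ N ⊂ M}

/-- The `k`-th generation `𝒢_k(𝒳)`: the founding generation `𝒢₀(𝒳)` consists of the maximal
elements, and `𝒢_k(𝒳) = 𝒢₀(𝒳 \ (𝒢₀(𝒳) ∪ ⋯ ∪ 𝒢_{k-1}(𝒳)))`. -/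
def gen : ℕ → Set (Set ℝ) → Set (Set ℝ)
  | 0, X => maxEls X
  | (k + 1), X => gen k (X \ maxEls X)

open scoped ENNReal

namespace SetFamily

def ancestors (X : Set (Set ℝ)) (M : Set ℝ) : Set (Set ℝ) := {L | L ∈ X ∧ M ⊂ L}

noncomputable def depth (X : Set (Set ℝ)) (M : Set ℝ) : ℕ := (ancestors X M).ncard

def below (X : Set (Set ℝ)) (N : Set ℝ) : Set (Set ℝ) := {M | M ∈ X ∧ M ⊆ N}

theorem below_subset (X : Set (Set ℝ)) (N : Set ℝ) : below X N ⊆ X := fun _ hM => hM.1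

theorem ancestors_sdiff (X Y : Set (Set ℝ)) (M : Set ℝ) :
    ancestors (X \ Y) M = ancestors X M \ Y := by
  ext L
  simp only [ancestors, Set.mem_ofPred_eq, Set.mem_sdiff]
  tauto

theorem below_below {X : Set (Set ℝ)} {M N : Set ℝ} (h : M ⊆ N) :
    below (below X N) M = below X M := by
  ext L
  simp only [below, Set.mem_ofPred_eq]
  exact ⟨fun hL => ⟨hL.1.1, hL.2⟩, fun hL => ⟨⟨hL.1, hL.2.trans h⟩, hL.2⟩⟩

theorem maxEls_below {X : Set (Set ℝ)} {N : Set ℝ} (hN : N ∈ X) : maxEls (below X N) = {N} := by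
  ext M
  simp only [maxEls, below, Set.mem_ofPred_eq, Set.mem_singleton_iff]
  constructor
  · rintro ⟨⟨-, hMN⟩, hmax⟩
    by_contra hne
    exact hmax N ⟨hN, subset_rfl⟩ (hMN.ssubset_of_ne hne)
  · rintro rfl
    exact ⟨⟨hN, subset_rfl⟩, fun L hL hML => hML.not_subset hL.2⟩

theorem depth_lt_depth_of_ssubset {X : Set (Set ℝ)} {A B : Set ℝ}
    (hA : (ancestors X A).Finite) (hB : B ∈ X) (hAB : A ⊂ B) : depth X B < depth X A := by
  refine Set.ncard_lt_ncard (Set.ssubset_iff_insert.2 ⟨B, fun h => h.2.ne rfl, ?_⟩) hA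
  rintro L (rfl | hL)
  · exact ⟨hB, hAB⟩
  · exact ⟨hL.1, hAB.trans hL.2⟩

end SetFamily

open SetFamily

structure LocallyFiniteNested (X : Set (Set ℝ)) : Prop where
  nested : Nested X
  nonempty : ∀ M ∈ X, M.Nonempty
  finite_ancestors : ∀ M ∈ X, (ancestors X M).Finite

namespace LocallyFiniteNested

variable {X : Set (Set ℝ)} {M : Set ℝ}

theorem mono {Y : Set (Set ℝ)} (hX : LocallyFiniteNested X) (hYX : Y ⊆ X) :
    LocallyFiniteNested Y where
  nested A hA B hB := hX.nested A (hYX hA) B (hYX hB)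
  nonempty A hA := hX.nonempty A (hYX hA)
  finite_ancestors A hA := (hX.finite_ancestors A (hYX hA)).subset fun _ hL => ⟨hYX hL.1, hL.2⟩

theorem isChain_ancestors (hX : LocallyFiniteNested X) (hM : M ∈ X) :
    IsChain (· ⊆ ·) (ancestors X M) := by
  obtain ⟨x, hx⟩ := hX.nonempty M hM
  exact fun A hA B hB _ => hX.nested A hA.1 B hB.1 ⟨x, hA.2.subset hx, hB.2.subset hx⟩

theorem mem_maxEls_iff (hX : LocallyFiniteNested X) : M ∈ maxEls X ↔ M ∈ X ∧ depth X M = 0 := by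
  refine ⟨fun hM => ⟨hM.1, ?_⟩, fun ⟨hM, h0⟩ => ⟨hM, fun _ hL hML => ?_⟩⟩
  · rw [depth, Set.ncard_eq_zero (hX.finite_ancestors M hM.1)]
    exact Set.eq_empty_iff_forall_notMem.2 fun L hL => hM.2 L hL.1 hL.2
  · rw [depth, Set.ncard_eq_zero (hX.finite_ancestors M hM)] at h0
    exact h0.subset ⟨hL, hML⟩

theorem ncard_ancestors_inter_maxEls (hX : LocallyFiniteNested X) (hM : M ∈ X)
    (hne : (ancestors X M).Nonempty) : (ancestors X M ∩ maxEls X).ncard = 1 := by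
  obtain ⟨T, hT⟩ := (hX.finite_ancestors M hM).exists_maximal hne
  have hTmax : T ∈ maxEls X := ⟨hT.prop.1, fun L hL hTL =>
    hTL.not_subset (hT.le_of_ge ⟨hL, hT.prop.2.trans hTL⟩ hTL.subset)⟩
  have hsub : (ancestors X M ∩ maxEls X).Subsingleton := by
    rintro A ⟨hA, hAmax⟩ B ⟨hB, hBmax⟩
    by_contra hAB
    rcases (hX.isChain_ancestors hM).total hA hB with h | h
    · exact hAmax.2 B hB.1 (h.ssubset_of_ne hAB)
    · exact hBmax.2 A hA.1 (h.ssubset_of_ne (Ne.symm hAB))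
  exact Set.ncard_eq_one.2 ⟨T, hsub.eq_singleton_of_mem ⟨hT.prop, hTmax⟩⟩

theorem depth_sdiff_maxEls_add_one (hX : LocallyFiniteNested X) (hM : M ∈ X)
    (hM' : M ∉ maxEls X) : depth (X \ maxEls X) M + 1 = depth X M := by
  have hne : (ancestors X M).Nonempty := by
    by_contra h
    exact hM' ⟨hM, fun L hL hML => h ⟨L, hL, hML⟩⟩
  rw [depth, ancestors_sdiff, add_comm, ← hX.ncard_ancestors_inter_maxEls hM hne, depth,
    Set.ncard_inter_add_ncard_sdiff_eq_ncard _ _ (hX.finite_ancestors M hM)]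

theorem mem_gen_iff (hX : LocallyFiniteNested X) (ℓ : ℕ) :
    M ∈ gen ℓ X ↔ M ∈ X ∧ depth X M = ℓ := by
  induction ℓ generalizing X with
  | zero => exact hX.mem_maxEls_iff
  | succ ℓ ih =>
    rw [gen, ih (hX.mono Set.sdiff_subset)]
    constructor
    · rintro ⟨⟨hM, hM'⟩, hd⟩
      exact ⟨hM, by rw [← hX.depth_sdiff_maxEls_add_one hM hM', hd]⟩
    · rintro ⟨hM, hd⟩
      have hM' : M ∉ maxEls X := fun h => absurd (hX.mem_maxEls_iff.1 h).2 (by omega)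
      exact ⟨⟨hM, hM'⟩, by have := hX.depth_sdiff_maxEls_add_one hM hM'; omega⟩

theorem gen_subset (hX : LocallyFiniteNested X) (ℓ : ℕ) : gen ℓ X ⊆ X :=
  fun _ hM => ((hX.mem_gen_iff ℓ).1 hM).1

theorem iUnion_gen (hX : LocallyFiniteNested X) : ⋃ ℓ, gen ℓ X = X :=
  Set.Subset.antisymm (Set.iUnion_subset hX.gen_subset) fun M hM =>
    Set.mem_iUnion.2 ⟨depth X M, (hX.mem_gen_iff _).2 ⟨hM, rfl⟩⟩

theorem pairwise_disjoint_gen (hX : LocallyFiniteNested X) (ℓ : ℕ) :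
    (gen ℓ X).Pairwise Disjoint := by
  intro A hA B hB hAB
  rw [hX.mem_gen_iff] at hA hB
  rw [Set.disjoint_iff_inter_eq_empty, ← Set.not_nonempty_iff_eq_empty]
  intro hint
  rcases hX.nested A hA.1 B hB.1 hint with h | h
  · have := depth_lt_depth_of_ssubset (hX.finite_ancestors A hA.1) hB.1 (h.ssubset_of_ne hAB)
    omega
  · have := depth_lt_depth_of_ssubset (hX.finite_ancestors B hB.1) hA.1
      (h.ssubset_of_ne (Ne.symm hAB))
    omega

/-- The smallest ancestor of `M` is one generation above it. -/
theorem exists_parent (hX : LocallyFiniteNested X) (hM : M ∈ X) (hpos : depth X M ≠ 0) :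
    ∃ P ∈ ancestors X M, depth X P + 1 = depth X M := by
  have hfin := hX.finite_ancestors M hM
  obtain ⟨P, hP⟩ := hfin.exists_minimal (Set.nonempty_of_ncard_ne_zero hpos)
  have hlb : ∀ L ∈ ancestors X M, P ⊆ L := fun L hL =>
    ((hX.isChain_ancestors hM).total hP.prop hL).elim id (hP.le_of_le hL)
  have hPanc : ancestors X P = ancestors X M \ {P} := by
    ext L
    refine ⟨fun hL => ⟨⟨hL.1, hP.prop.2.trans hL.2⟩, hL.2.ne'⟩, fun ⟨hL, hLP⟩ => ⟨hL.1, ?_⟩⟩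
    exact (hlb L hL).ssubset_of_ne (Ne.symm hLP)
  exact ⟨P, hP.prop, by rw [depth, hPanc, Set.ncard_sdiff_singleton_add_one hP.prop hfin, depth]⟩

theorem exists_superset_depth_eq (hX : LocallyFiniteNested X) (hM : M ∈ X) {ℓ : ℕ}
    (hℓ : ℓ ≤ depth X M) : ∃ M' ∈ X, M ⊆ M' ∧ depth X M' = ℓ := by
  obtain ⟨n, hn⟩ := Nat.exists_eq_add_of_le hℓ
  induction n generalizing M with
  | zero => exact ⟨M, hM, subset_rfl, by omega⟩
  | succ n ih =>
    obtain ⟨P, hP, hPd⟩ := hX.exists_parent hM (by omega)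
    obtain ⟨M', hM', hPM', hd⟩ := ih hP.1 (by omega) (by omega)
    exact ⟨M', hM', hP.2.subset.trans hPM', hd⟩

/-- By nestedness, an ancestor of `M` either lies inside `M' ⊇ M` or strictly contains it. -/
theorem depth_eq_depth_below_add (hX : LocallyFiniteNested X) (hM : M ∈ X) {M' : Set ℝ}
    (hM' : M' ∈ X) (hMM' : M ⊆ M') : depth X M = depth (below X M') M + depth X M' := by
  have hsplit : ancestors X M = ancestors (below X M') M ∪ ancestors X M' := by
    ext L
    refine ⟨fun hL => ?_, ?_⟩
    · obtain ⟨x, hx⟩ := hX.nonempty M hM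
      rcases hX.nested L hL.1 M' hM' ⟨x, hL.2.subset hx, hMM' hx⟩ with h | h
      · exact Or.inl ⟨⟨hL.1, h⟩, hL.2⟩
      · by_cases hL' : L ⊆ M'
        · exact Or.inl ⟨⟨hL.1, hL'⟩, hL.2⟩
        · exact Or.inr ⟨hL.1, h.ssubset_of_ne fun h' => hL' h'.ge⟩
    · rintro (hL | hL)
      · exact ⟨hL.1.1, hL.2⟩
      · exact ⟨hL.1, hMM'.trans_ssubset hL.2⟩
  have hdisj : Disjoint (ancestors (below X M') M) (ancestors X M') :=
    Set.disjoint_left.2 fun L hL hL' => hL'.2.not_subset hL.1.2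
  have hfin := hX.finite_ancestors M hM
  rw [hsplit] at hfin
  rw [depth, hsplit, Set.ncard_union_eq hdisj (hfin.subset Set.subset_union_left)
    (hfin.subset Set.subset_union_right), depth, depth]

theorem gen_add_subset (hX : LocallyFiniteNested X) (ℓ i : ℕ) :
    gen (ℓ + i) X ⊆ ⋃ M' ∈ gen ℓ X, gen i (below X M') := by
  intro M hM
  rw [hX.mem_gen_iff] at hM
  obtain ⟨M', hM', hMM', hd⟩ := hX.exists_superset_depth_eq hM.1 (ℓ := ℓ) (by omega)
  have hadd := hX.depth_eq_depth_below_add hM.1 hM' hMM'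
  refine Set.mem_biUnion ((hX.mem_gen_iff ℓ).2 ⟨hM', hd⟩) ?_
  rw [(hX.mono (below_subset X M')).mem_gen_iff]
  exact ⟨⟨hM.1, hMM'⟩, by omega⟩

end LocallyFiniteNested

section Measure

variable {α : Type*} [MeasurableSpace α] {μ : Measure α} [SFinite μ]

theorem countable_of_pairwise_disjoint_of_measure_pos {S : Set (Set α)}
    (hd : S.Pairwise Disjoint) (hS : ∀ M ∈ S, MeasurableSet M ∧ 0 < μ M) : S.Countable := by
  have h := Measure.countable_meas_pos_of_disjoint_iUnion (μ := μ)
    (fun M : S => (hS M M.2).1) fun A B hAB => hd A.2 B.2 (Subtype.coe_ne_coe.2 hAB)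
  have hall : {M : S | 0 < μ M} = Set.univ := Set.eq_univ_of_forall fun M => (hS M M.2).2
  rw [hall, Set.countable_univ_iff] at h
  exact Set.countable_coe_iff.1 h

theorem measure_sUnion_of_pairwise_disjoint_of_measure_pos {S : Set (Set α)}
    (hd : S.Pairwise Disjoint) (hS : ∀ M ∈ S, MeasurableSet M ∧ 0 < μ M) :
    μ (⋃₀ S) = ∑' M : S, μ M :=
  measure_sUnion (countable_of_pairwise_disjoint_of_measure_pos hd hS) hd fun M hM => (hS M hM).1

end Measure

namespace LocallyFiniteNested

variable {μ : Measure ℝ} [SFinite μ] {𝒳 : Set (Set ℝ)}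

theorem countable_gen (h𝒳 : LocallyFiniteNested 𝒳) (hμ : ∀ M ∈ 𝒳, MeasurableSet M ∧ 0 < μ M)
    (ℓ : ℕ) : (gen ℓ 𝒳).Countable :=
  countable_of_pairwise_disjoint_of_measure_pos (h𝒳.pairwise_disjoint_gen ℓ)
    fun M hM => hμ M (h𝒳.gen_subset ℓ hM)

theorem measure_sUnion_gen (h𝒳 : LocallyFiniteNested 𝒳)
    (hμ : ∀ M ∈ 𝒳, MeasurableSet M ∧ 0 < μ M) (ℓ : ℕ) :
    μ (⋃₀ gen ℓ 𝒳) = ∑' M : gen ℓ 𝒳, μ M :=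
  measure_sUnion_of_pairwise_disjoint_of_measure_pos (h𝒳.pairwise_disjoint_gen ℓ)
    fun M hM => hμ M (h𝒳.gen_subset ℓ hM)

theorem measure_sUnion_gen_add_le (h𝒳 : LocallyFiniteNested 𝒳)
    (hμ : ∀ M ∈ 𝒳, MeasurableSet M ∧ 0 < μ M) (N : Set ℝ) (ℓ i : ℕ) :
    μ (⋃₀ gen (ℓ + i) (below 𝒳 N)) ≤ ∑' M : gen ℓ (below 𝒳 N), μ (⋃₀ gen i (below 𝒳 M)) := by
  have hY := h𝒳.mono (below_subset 𝒳 N)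
  calc μ (⋃₀ gen (ℓ + i) (below 𝒳 N))
      ≤ μ (⋃ M ∈ gen ℓ (below 𝒳 N), ⋃₀ gen i (below 𝒳 M)) := by
        refine measure_mono (Set.sUnion_subset fun M hM => ?_)
        obtain ⟨M', hM', hMM'⟩ := Set.mem_iUnion₂.1 (hY.gen_add_subset ℓ i hM)
        rw [below_below (hY.gen_subset ℓ hM').2] at hMM'
        exact (Set.subset_sUnion_of_mem hMM').trans
          (Set.subset_biUnion_of_mem (u := fun M => ⋃₀ gen i (below 𝒳 M)) hM')
    _ ≤ _ := measure_biUnion_le μ (hY.countable_gen (fun M hM => hμ M hM.1) ℓ) _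

theorem sum_measure_sUnion_gen_le (h𝒳 : LocallyFiniteNested 𝒳)
    (hμ : ∀ M ∈ 𝒳, MeasurableSet M ∧ 0 < μ M) {k : ℕ} {a C : ℝ≥0∞} (hC : k + C * a ≤ C)
    (hsparse : ∀ N ∈ 𝒳, ∃ ℓ, 1 ≤ ℓ ∧ ℓ ≤ k ∧ μ (⋃₀ gen ℓ (below 𝒳 N)) ≤ a * μ N) (d : ℕ) :
    ∀ N ∈ 𝒳, ∑ j ∈ Finset.range d, μ (⋃₀ gen j (below 𝒳 N)) ≤ C * μ N := by
  induction d using Nat.strong_induction_on with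
  | _ d ih =>
  intro N hN
  have hY := h𝒳.mono (below_subset 𝒳 N)
  have hgen_le : ∀ j, μ (⋃₀ gen j (below 𝒳 N)) ≤ μ N := fun j =>
    measure_mono (Set.sUnion_subset fun M hM => (hY.gen_subset j hM).2)
  have hfirst : ∀ n ≤ k, ∑ j ∈ Finset.range n, μ (⋃₀ gen j (below 𝒳 N)) ≤ k * μ N := by
    intro n hn
    calc _ ≤ ∑ _j ∈ Finset.range n, μ N := Finset.sum_le_sum fun j _ => hgen_le j
      _ = n * μ N := by rw [Finset.sum_const, Finset.card_range, nsmul_eq_mul]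
      _ ≤ k * μ N := by gcongr
  obtain ⟨ℓ, hℓ1, hℓk, hℓ⟩ := hsparse N hN
  rcases le_or_gt d ℓ with hdℓ | hℓd
  · exact (hfirst d (hdℓ.trans hℓk)).trans (by gcongr; exact le_self_add.trans hC)
  obtain ⟨m, rfl⟩ := Nat.exists_eq_add_of_lt hℓd
  have hdeeper : ∑ i ∈ Finset.range (m + 1), μ (⋃₀ gen (ℓ + i) (below 𝒳 N)) ≤ C * (a * μ N) :=
    calc _ ≤ ∑ i ∈ Finset.range (m + 1),
          ∑' M : gen ℓ (below 𝒳 N), μ (⋃₀ gen i (below 𝒳 M)) :=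
          Finset.sum_le_sum fun i _ => h𝒳.measure_sUnion_gen_add_le hμ N ℓ i
      _ = ∑' M : gen ℓ (below 𝒳 N), ∑ i ∈ Finset.range (m + 1), μ (⋃₀ gen i (below 𝒳 M)) :=
          (Summable.tsum_finsetSum fun _ _ => ENNReal.summable).symm
      _ ≤ ∑' M : gen ℓ (below 𝒳 N), C * μ M :=
          ENNReal.tsum_le_tsum fun M => ih _ (by omega) M (hY.gen_subset ℓ M.2).1
      _ = C * μ (⋃₀ gen ℓ (below 𝒳 N)) := by
          rw [ENNReal.tsum_mul_left, hY.measure_sUnion_gen (fun M hM => hμ M hM.1)]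
      _ ≤ C * (a * μ N) := by gcongr
  calc _ = ∑ j ∈ Finset.range ℓ, μ (⋃₀ gen j (below 𝒳 N))
        + ∑ i ∈ Finset.range (m + 1), μ (⋃₀ gen (ℓ + i) (below 𝒳 N)) := Finset.sum_range_add ..
    _ ≤ k * μ N + C * (a * μ N) := add_le_add (hfirst ℓ hℓk) hdeeper
    _ = (k + C * a) * μ N := by ring
    _ ≤ C * μ N := by gcongr

theorem tsum_measure_below_le (h𝒳 : LocallyFiniteNested 𝒳)
    (hμ : ∀ M ∈ 𝒳, MeasurableSet M ∧ 0 < μ M) {k : ℕ} {a C : ℝ≥0∞} (hC : k + C * a ≤ C)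
    (hsparse : ∀ N ∈ 𝒳, ∃ ℓ, 1 ≤ ℓ ∧ ℓ ≤ k ∧ μ (⋃₀ gen ℓ (below 𝒳 N)) ≤ a * μ N)
    {N : Set ℝ} (hN : N ∈ 𝒳) : ∑' M : below 𝒳 N, μ M ≤ C * μ N := by
  have hY := h𝒳.mono (below_subset 𝒳 N)
  calc ∑' M : below 𝒳 N, μ M = ∑' M : ⋃ j, gen j (below 𝒳 N), μ M := by rw [hY.iUnion_gen]
    _ ≤ ∑' j, ∑' M : gen j (below 𝒳 N), μ M := ENNReal.tsum_iUnion_le_tsum _ _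
    _ = ∑' j, μ (⋃₀ gen j (below 𝒳 N)) := tsum_congr fun j =>
        (hY.measure_sUnion_gen (fun M hM => hμ M hM.1) j).symm
    _ = ⨆ d, ∑ j ∈ Finset.range d, μ (⋃₀ gen j (below 𝒳 N)) := ENNReal.tsum_eq_iSup_nat
    _ ≤ C * μ N := iSup_le fun d => h𝒳.sum_measure_sUnion_gen_le hμ hC hsparse d N hN

end LocallyFiniteNested

theorem comb_lemma_two_general (𝒩 : Set (Set ℝ)) (hnested : Nested 𝒩)
    (hmeas : ∀ N ∈ 𝒩, MeasurableSet N ∧ 0 < volume N ∧ volume N < ⊤)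
    (𝒳 : Set (Set ℝ)) (h𝒳 : 𝒳 ⊆ 𝒩)
    (hwf : ∀ N ∈ 𝒳, {M | M ∈ 𝒳 ∧ N ⊆ M}.Finite)
    (k : ℕ) (ρ : ℝ) (hρ0 : 0 < ρ) (hρ1 : ρ < 1)
    (hcarleson : ∃ N ∈ 𝒳, ENNReal.ofReal ((k : ℝ) / ρ) * volume N <
      ∑' M : {M : Set ℝ // M ∈ 𝒳 ∧ M ⊆ N}, volume (M : Set ℝ)) :
    ∃ N₀ ∈ 𝒩, ∀ ℓ ≤ k,
      ENNReal.ofReal (1 - ρ) * volume N₀ <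
        volume (⋃₀ gen ℓ {N | N ∈ 𝒳 ∧ N ⊆ N₀}) := by
  by_contra! hsmall
  obtain ⟨N, hN, hlt⟩ := hcarleson
  have hX : LocallyFiniteNested 𝒳 :=
    { nested := fun A hA B hB => hnested A (h𝒳 hA) B (h𝒳 hB)
      nonempty := fun M hM => nonempty_of_measure_ne_zero (hmeas M (h𝒳 hM)).2.1.ne'
      finite_ancestors := fun M hM => (hwf M hM).subset fun _ hL => ⟨hL.1, hL.2.subset⟩ }
  have hsparse : ∀ N ∈ 𝒳, ∃ ℓ, 1 ≤ ℓ ∧ ℓ ≤ k ∧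
      volume (⋃₀ gen ℓ (below 𝒳 N)) ≤ ENNReal.ofReal (1 - ρ) * volume N := by
    intro N hN
    obtain ⟨ℓ, hℓk, hℓ⟩ : ∃ ℓ ≤ k, volume (⋃₀ gen ℓ (below 𝒳 N)) ≤ _ := hsmall N (h𝒳 hN)
    refine ⟨ℓ, Nat.one_le_iff_ne_zero.2 ?_, hℓk, hℓ⟩
    rintro rfl
    obtain ⟨-, hpos, hfin⟩ := hmeas N (h𝒳 hN)
    have hshrink : ENNReal.ofReal (1 - ρ) * volume N < volume N := by
      simpa using (ENNReal.mul_lt_mul_iff_left hpos.ne' hfin.ne).2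
        (ENNReal.ofReal_lt_one.2 (by linarith) : ENNReal.ofReal (1 - ρ) < 1)
    rw [gen, maxEls_below hN, Set.sUnion_singleton] at hℓ
    exact hℓ.not_gt hshrink
  have hC : (k : ℝ≥0∞) + ENNReal.ofReal (k / ρ) * ENNReal.ofReal (1 - ρ) ≤
      ENNReal.ofReal (k / ρ) := by
    rw [← ENNReal.ofReal_natCast, ← ENNReal.ofReal_mul (by positivity),
      ← ENNReal.ofReal_add (by positivity) (by have := sub_pos.2 hρ1; positivity)]
    exact ENNReal.ofReal_le_ofReal (le_of_eq (by field_simp; ring))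
  exact (hX.tsum_measure_below_le (fun M hM => ⟨(hmeas M (h𝒳 hM)).1, (hmeas M (h𝒳 hM)).2.1⟩)
    hC hsparse hN).not_gt hlt

/-- Lemma `lem:comb-2`: if `𝒳 ⊆ 𝒩` has Carleson constant `> k/ρ`, then there exists
`N₀ ∈ 𝒩` such that for every `0 ≤ ℓ ≤ k`, the point-set of the `ℓ`-th generation of
`{N ∈ 𝒳 : N ⊆ N₀}` has measure greater than `(1-ρ)|N₀|`.
(The hypothesis `hwf` asserts that above each member of `𝒳` there are only finitely many
members, so that every member lies in some generation, as is implicit for nested collections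
of dyadic type; `0 < ρ < 1` as in the proof.) -/
theorem comb_lemma_two (𝒩 : Set (Set ℝ)) (hnested : Nested 𝒩)
    (hmeas : ∀ N ∈ 𝒩, MeasurableSet N ∧ 0 < volume N ∧ volume N < ⊤)
    (𝒳 : Set (Set ℝ)) (h𝒳 : 𝒳 ⊆ 𝒩)
    (hwf : ∀ N ∈ 𝒳, {M | M ∈ 𝒳 ∧ N ⊆ M}.Finite)
    (k : ℕ) (hk : 1 ≤ k) (ρ : ℝ) (hρ0 : 0 < ρ) (hρ1 : ρ < 1)
    (hcarleson : ∃ N ∈ 𝒳, ENNReal.ofReal ((k : ℝ) / ρ) * volume N <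
      ∑' M : {M : Set ℝ // M ∈ 𝒳 ∧ M ⊆ N}, volume (M : Set ℝ)) :
    ∃ N₀ ∈ 𝒩, ∀ ℓ ≤ k,
      ENNReal.ofReal (1 - ρ) * volume N₀ <
        volume (⋃₀ gen ℓ {N | N ∈ 𝒳 ∧ N ⊆ N₀}) :=
  comb_lemma_two_general 𝒩 hnested hmeas 𝒳 h𝒳 hwf k ρ hρ0 hρ1 hcarleson
end

section
/- Let n ∈ ℕ₀ and α, β ∈ ℝ with 0 < β < 1 and 0 < α < 2^{−n−1} β^{n+1}. Let 𝒳 be a collection of measurable nested sets of finite positive measure with |G_n(𝒳)| > (1−α)|G₀(𝒳)|. Then there exists a subcollection 𝒴 ⊆ 𝒳 such that |G_n(𝒴)| > (1 − α·2^{n+1}/β^{n+1}) |G₀(𝒳)| and |N ∩ G_n(𝒴)| ≥ (1−β)|N| for every N ∈ 𝒴. -/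
open MeasureTheory

/-!
Prune the generations `0, …, n` from the bottom up. The surviving part of a set of generation
`n` is the set itself; that of a set of generation `k < n` is the union of the surviving parts of
its kept children, where a set is kept when its surviving part fills at least a `(1 - β)`-fraction
of it. `𝒴` consists of the sets of generation `≤ n` all of whose ancestors are kept. A discarded
set `M` with surviving part `D` has `β |D| ≤ |M \ D|`, and the sets `M \ D` are disjoint pieces of
`G₀` left uncovered, so each level of pruning multiplies the uncovered measure by at most
`1 + 1/β ≤ 2/β`. Starting from less than `α |G₀|` uncovered at generation `n`, after `n + 1`
levels less than `α (2/β)^(n+1) |G₀|` of `G₀` is left outside `G_n(𝒴)`.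
-/

open Set
open scoped ENNReal

-- `genFrom k X` is what remains of `X` once its generations `0, …, k - 1` are removed.
def genFrom (k : ℕ) (X : Set (Set ℝ)) : Set (Set ℝ) :=
  (fun Y => Y \ maxEls Y)^[k] X

section Generations

variable {X : Set (Set ℝ)} {j k m : ℕ} {M N : Set ℝ}

theorem maxEls_subset (X : Set (Set ℝ)) : maxEls X ⊆ X := fun _ h => h.1

theorem gen_eq_maxEls_genFrom : ∀ (k : ℕ) (X : Set (Set ℝ)), gen k X = maxEls (genFrom k X)
  | 0, _ => rfl
  | k + 1, X => by
    rw [gen, gen_eq_maxEls_genFrom k, genFrom, genFrom, Function.iterate_succ_apply]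

theorem genFrom_succ (k : ℕ) (X : Set (Set ℝ)) :
    genFrom (k + 1) X = genFrom k X \ gen k X := by
  rw [gen_eq_maxEls_genFrom, genFrom, Function.iterate_succ_apply']
  rfl

theorem genFrom_antitone (X : Set (Set ℝ)) : Antitone (genFrom · X) :=
  antitone_nat_of_succ_le fun k => by rw [genFrom_succ]; exact sdiff_subset

theorem gen_subset_genFrom : gen k X ⊆ genFrom k X := by
  rw [gen_eq_maxEls_genFrom]
  exact maxEls_subset _

theorem gen_subset : gen k X ⊆ X :=
  gen_subset_genFrom.trans (genFrom_antitone X k.zero_le)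

theorem le_of_mem_gen_of_mem_genFrom (hN : N ∈ gen k X) (hN' : N ∈ genFrom m X) : m ≤ k := by
  by_contra! h
  have hN'' : N ∈ genFrom (k + 1) X := genFrom_antitone X h hN'
  rw [genFrom_succ] at hN''
  exact hN''.2 hN

theorem eq_of_mem_gen_of_mem_gen (hj : N ∈ gen j X) (hk : N ∈ gen k X) : j = k :=
  le_antisymm (le_of_mem_gen_of_mem_genFrom hk (gen_subset_genFrom hj))
    (le_of_mem_gen_of_mem_genFrom hj (gen_subset_genFrom hk))

theorem lt_of_mem_gen_of_ssubset (hN : N ∈ gen k X) (hM : M ∈ gen j X) (h : N ⊂ M) : j < k := by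
  by_contra! hkj
  rw [gen_eq_maxEls_genFrom] at hN
  exact hN.2 M (genFrom_antitone X hkj (gen_subset_genFrom hM)) h

theorem exists_parent (hN : N ∈ gen (k + 1) X) : ∃ M ∈ gen k X, N ⊂ M := by
  rw [gen_eq_maxEls_genFrom, genFrom_succ] at hN
  obtain ⟨⟨hNk, hNgen⟩, hNmax⟩ := hN
  rw [gen_eq_maxEls_genFrom] at hNgen
  obtain ⟨M, hMk, hNM⟩ : ∃ M ∈ genFrom k X, N ⊂ M := by
    simpa [maxEls, hNk] using hNgen
  refine ⟨M, ?_, hNM⟩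
  by_contra hM
  exact hNmax M ⟨hMk, hM⟩ hNM

theorem subset_sUnion_maxEls_of_mem_gen : ∀ {k : ℕ} {N : Set ℝ}, N ∈ gen k X → N ⊆ ⋃₀ maxEls X
  | 0, _, hN => subset_sUnion_of_mem hN
  | _ + 1, _, hN =>
    let ⟨_, hM, hNM⟩ := exists_parent hN
    hNM.subset.trans (subset_sUnion_maxEls_of_mem_gen hM)

theorem sUnion_gen_subset_sUnion_maxEls : ⋃₀ gen k X ⊆ ⋃₀ maxEls X :=
  sUnion_subset fun _ => subset_sUnion_maxEls_of_mem_gen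

theorem Nested.subset_of_mem_gen (hX : Nested X) (hM : M ∈ gen j X) (hN : N ∈ gen k X)
    (hkj : k ≤ j) (hMN : (M ∩ N).Nonempty) : M ⊆ N := by
  rcases hX M (gen_subset hM) N (gen_subset hN) hMN with h | h
  · exact h
  · rcases h.eq_or_ssubset with rfl | h
    · exact subset_rfl
    · exact absurd (lt_of_mem_gen_of_ssubset hN hM h) hkj.not_gt

theorem Nested.pairwiseDisjoint_gen (hX : Nested X) (k : ℕ) : (gen k X).PairwiseDisjoint id := by
  intro M hM N hN hne
  by_contra h
  rw [Function.onFun, id, id, not_disjoint_iff_nonempty_inter] at h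
  exact hne (subset_antisymm (hX.subset_of_mem_gen hM hN le_rfl h)
    (hX.subset_of_mem_gen hN hM le_rfl (inter_comm M N ▸ h)))

theorem maxEls_inter_genFrom {Y : Set (Set ℝ)} (hY : ∀ N ∈ Y, ∃ k, N ∈ gen k X)
    (hpar : ∀ k, ∀ N ∈ Y, N ∈ gen (k + 1) X → ∃ M ∈ Y, M ∈ gen k X ∧ N ⊂ M) (m : ℕ) :
    maxEls (Y ∩ genFrom m X) = Y ∩ gen m X := by
  ext N
  constructor
  · rintro ⟨⟨hNY, hNm⟩, hNmax⟩
    refine ⟨hNY, ?_⟩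
    obtain ⟨k, hNk⟩ := hY N hNY
    obtain rfl | hmk := (le_of_mem_gen_of_mem_genFrom hNk hNm).eq_or_lt
    · exact hNk
    obtain ⟨k, rfl⟩ := Nat.exists_eq_add_of_lt hmk
    obtain ⟨M, hMY, hMk, hNM⟩ := hpar _ N hNY hNk
    exact absurd hNM (hNmax M ⟨hMY, genFrom_antitone X (by omega) (gen_subset_genFrom hMk)⟩)
  · rintro ⟨hNY, hNm⟩
    rw [gen_eq_maxEls_genFrom] at hNm
    exact ⟨⟨hNY, hNm.1⟩, fun M hM => hNm.2 M hM.2⟩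

theorem gen_eq_inter_of_forall_exists_parent {Y : Set (Set ℝ)} (hY : ∀ N ∈ Y, ∃ k, N ∈ gen k X)
    (hpar : ∀ k, ∀ N ∈ Y, N ∈ gen (k + 1) X → ∃ M ∈ Y, M ∈ gen k X ∧ N ⊂ M) (m : ℕ) :
    gen m Y = Y ∩ gen m X := by
  suffices h : ∀ m, genFrom m Y = Y ∩ genFrom m X by
    rw [gen_eq_maxEls_genFrom, h, maxEls_inter_genFrom hY hpar]
  intro m
  induction m with
  | zero =>
    refine (inter_eq_left.2 fun N hN => ?_).symm
    obtain ⟨k, hNk⟩ := hY N hN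
    exact gen_subset hNk
  | succ m ih =>
    rw [genFrom_succ, genFrom_succ, gen_eq_maxEls_genFrom, ih, maxEls_inter_genFrom hY hpar,
      inter_sdiff_distrib_left]

end Generations

theorem Set.PairwiseDisjoint.countable_of_measure_pos {Ω : Type*} [MeasurableSpace Ω]
    {μ : Measure Ω} [SFinite μ] {S : Set (Set Ω)} (hS : S.PairwiseDisjoint id)
    (hmeas : ∀ s ∈ S, MeasurableSet s) (hpos : ∀ s ∈ S, 0 < μ s) : S.Countable := by
  have h := Measure.countable_meas_pos_of_disjoint_iUnion (μ := μ) (As := fun s : S => (s : Set Ω))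
    (fun s => hmeas s s.2) fun s t hst => hS s.2 t.2 (Subtype.coe_ne_coe.2 hst)
  rw [show {s : S | 0 < μ s} = univ from eq_univ_of_forall fun s => hpos s s.2,
    countable_univ_iff, countable_coe_iff] at h
  exact h

theorem ofReal_mul_measure_le_measure_diff {Ω : Type*} [MeasurableSpace Ω] {μ : Measure Ω}
    {D M : Set Ω} {β : ℝ} (hDM : D ⊆ M) (hD : MeasurableSet D)
    (h : μ D < ENNReal.ofReal (1 - β) * μ M) : ENNReal.ofReal β * μ D ≤ μ (M \ D) := by
  rcases eq_or_ne (μ (M \ D)) ∞ with hr | hr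
  · simp [hr]
  rw [← measure_inter_add_sdiff M hD, inter_eq_self_of_subset_right hDM] at h
  have hd := h.ne_top
  rw [← ENNReal.ofReal_toReal hd, ← ENNReal.ofReal_toReal hr] at h ⊢
  have hd0 : 0 ≤ (μ D).toReal := ENNReal.toReal_nonneg
  have hr0 : 0 ≤ (μ (M \ D)).toReal := ENNReal.toReal_nonneg
  rw [← ENNReal.ofReal_add hd0 hr0, ← ENNReal.ofReal_mul' (by positivity),
    ENNReal.ofReal_lt_ofReal_iff'] at h
  rw [← ENNReal.ofReal_mul' hd0]
  apply ENNReal.ofReal_le_ofReal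
  rcases le_or_gt 0 β with hβ | hβ <;> nlinarith [h.1]

section Pruning

variable (μ : Measure ℝ) (X : Set (Set ℝ)) (n : ℕ) (β : ℝ)

-- `pruned j N` is the surviving part of a set `N` of generation `n - j`.
def pruned : ℕ → Set ℝ → Set ℝ
  | 0, N => N
  | j + 1, N => ⋃ M ∈ {M | M ∈ gen (n - j) X ∧ M ⊆ N ∧
      ENNReal.ofReal (1 - β) * μ M ≤ μ (pruned j M)}, pruned j M

def IsKept (j : ℕ) (M : Set ℝ) : Prop :=
  ENNReal.ofReal (1 - β) * μ M ≤ μ (pruned μ X n β j M)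

def prunedUnion (j : ℕ) : Set ℝ :=
  ⋃ M ∈ gen (n - j) X, pruned μ X n β j M

def keptUnion (j : ℕ) : Set ℝ :=
  ⋃ M ∈ {M | M ∈ gen (n - j) X ∧ IsKept μ X n β j M}, pruned μ X n β j M

def discardedUnion (j : ℕ) : Set ℝ :=
  ⋃ M ∈ {M | M ∈ gen (n - j) X ∧ ¬ IsKept μ X n β j M}, pruned μ X n β j M

def AncestorsKept (N : Set ℝ) : Prop :=
  ∀ j, ∀ M ∈ gen j X, N ⊆ M → IsKept μ X n β (n - j) M

def keptSubcollection : Set (Set ℝ) :=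
  {N | (∃ k ≤ n, N ∈ gen k X) ∧ AncestorsKept μ X n β N}

variable {μ X n β}

theorem pruned_succ (j : ℕ) (N : Set ℝ) :
    pruned μ X n β (j + 1) N =
      ⋃ M ∈ {M | M ∈ gen (n - j) X ∧ M ⊆ N ∧ IsKept μ X n β j M}, pruned μ X n β j M :=
  rfl

theorem pruned_subset : ∀ (j : ℕ) (N : Set ℝ), pruned μ X n β j N ⊆ N
  | 0, _ => subset_rfl
  | j + 1, N => by
    rw [pruned_succ]
    exact iUnion₂_subset fun M hM => (pruned_subset j M).trans hM.2.1

theorem prunedUnion_zero : prunedUnion μ X n β 0 = ⋃₀ gen n X := by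
  rw [prunedUnion, sUnion_eq_biUnion]
  rfl

theorem prunedUnion_succ {j : ℕ} (hj : j < n) :
    prunedUnion μ X n β (j + 1) = keptUnion μ X n β j := by
  ext x
  simp only [prunedUnion, keptUnion, pruned_succ, mem_iUnion, mem_ofPred_eq, exists_prop]
  constructor
  · rintro ⟨N, -, M, ⟨hM, -, hMkept⟩, hx⟩
    exact ⟨M, ⟨hM, hMkept⟩, hx⟩
  · rintro ⟨M, ⟨hM, hMkept⟩, hx⟩
    obtain ⟨N, hN, hMN⟩ := exists_parent (k := n - (j + 1)) (X := X) (N := M)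
      (by rwa [show n - (j + 1) + 1 = n - j by omega])
    exact ⟨N, hN, M, ⟨hM, hMN.subset, hMkept⟩, hx⟩

theorem prunedUnion_subset_keptUnion_union_discardedUnion (j : ℕ) :
    prunedUnion μ X n β j ⊆ keptUnion μ X n β j ∪ discardedUnion μ X n β j := by
  intro x hx
  simp only [prunedUnion, keptUnion, discardedUnion, mem_union, mem_iUnion, mem_ofPred_eq,
    exists_prop] at hx ⊢
  obtain ⟨M, hM, hx⟩ := hx
  by_cases hMkept : IsKept μ X n β j M
  · exact Or.inl ⟨M, ⟨hM, hMkept⟩, hx⟩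
  · exact Or.inr ⟨M, ⟨hM, hMkept⟩, hx⟩

theorem sdiff_pruned_subset_sdiff_prunedUnion (hX : Nested X) {j : ℕ} {M : Set ℝ}
    (hM : M ∈ gen (n - j) X) : M \ pruned μ X n β j M ⊆ ⋃₀ maxEls X \ prunedUnion μ X n β j := by
  rintro x ⟨hxM, hxD⟩
  refine ⟨subset_sUnion_maxEls_of_mem_gen hM hxM, fun hxU => ?_⟩
  simp only [prunedUnion, mem_iUnion] at hxU
  obtain ⟨M', hM', hxM'⟩ := hxU
  obtain rfl : M = M' := (hX.pairwiseDisjoint_gen _).elim hM hM'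
    (not_disjoint_iff.2 ⟨x, hxM, pruned_subset _ _ hxM'⟩)
  exact hxD hxM'

section Measure

variable [SFinite μ] (hX : Nested X) (hmeas : ∀ N ∈ X, MeasurableSet N) (hpos : ∀ N ∈ X, 0 < μ N)
include hX hmeas hpos

theorem countable_gen (k : ℕ) : (gen k X).Countable :=
  (hX.pairwiseDisjoint_gen k).countable_of_measure_pos (fun _ hN => hmeas _ (gen_subset hN))
    fun _ hN => hpos _ (gen_subset hN)

theorem measurableSet_pruned : ∀ (j : ℕ) (N : Set ℝ), N ∈ X → MeasurableSet (pruned μ X n β j N)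
  | 0, N, hN => hmeas N hN
  | j + 1, N, _ => by
    rw [pruned_succ]
    exact MeasurableSet.biUnion ((countable_gen hX hmeas hpos _).mono fun M hM => hM.1)
      fun M hM => measurableSet_pruned j M (gen_subset hM.1)

theorem ofReal_mul_measure_discardedUnion_le (j : ℕ) :
    ENNReal.ofReal β * μ (discardedUnion μ X n β j) ≤
      μ (⋃₀ maxEls X \ prunedUnion μ X n β j) := by
  set B := {M | M ∈ gen (n - j) X ∧ ¬ IsKept μ X n β j M}
  have hB : B.Countable := (countable_gen hX hmeas hpos _).mono fun M hM => hM.1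
  have hBdisj : B.PairwiseDisjoint fun M => M \ pruned μ X n β j M :=
    ((hX.pairwiseDisjoint_gen _).subset fun M hM => hM.1).mono fun _ => sdiff_subset
  calc ENNReal.ofReal β * μ (⋃ M ∈ B, pruned μ X n β j M)
      ≤ ENNReal.ofReal β * ∑' M : B, μ (pruned μ X n β j M) := by
        gcongr
        exact measure_biUnion_le μ hB _
    _ = ∑' M : B, ENNReal.ofReal β * μ (pruned μ X n β j M) := ENNReal.tsum_mul_left.symm
    _ ≤ ∑' M : B, μ (M \ pruned μ X n β j M) := ENNReal.tsum_le_tsum fun M =>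
        ofReal_mul_measure_le_measure_diff (pruned_subset _ _)
          (measurableSet_pruned hX hmeas hpos _ _ (gen_subset M.2.1)) (not_le.1 M.2.2)
    _ = μ (⋃ M ∈ B, M \ pruned μ X n β j M) := (measure_biUnion hB hBdisj fun M hM =>
        (hmeas M (gen_subset hM.1)).diff
          (measurableSet_pruned hX hmeas hpos _ _ (gen_subset hM.1))).symm
    _ ≤ μ (⋃₀ maxEls X \ prunedUnion μ X n β j) :=
        measure_mono (iUnion₂_subset fun _ hM => sdiff_pruned_subset_sdiff_prunedUnion hX hM.1)

theorem ofReal_mul_measure_diff_keptUnion_le (hβ : β ≤ 1) (j : ℕ) :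
    ENNReal.ofReal β * μ (⋃₀ maxEls X \ keptUnion μ X n β j) ≤
      2 * μ (⋃₀ maxEls X \ prunedUnion μ X n β j) := by
  have hsub : ⋃₀ maxEls X \ keptUnion μ X n β j ⊆
      (⋃₀ maxEls X \ prunedUnion μ X n β j) ∪ discardedUnion μ X n β j := by
    rintro x ⟨hx, hxk⟩
    by_cases hxp : x ∈ prunedUnion μ X n β j
    · exact Or.inr ((prunedUnion_subset_keptUnion_union_discardedUnion j hxp).resolve_left hxk)
    · exact Or.inl ⟨hx, hxp⟩
  calc ENNReal.ofReal β * μ (⋃₀ maxEls X \ keptUnion μ X n β j)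
      ≤ ENNReal.ofReal β * μ (⋃₀ maxEls X \ prunedUnion μ X n β j) +
          ENNReal.ofReal β * μ (discardedUnion μ X n β j) := by
        rw [← mul_add]
        gcongr
        exact (measure_mono hsub).trans (measure_union_le _ _)
    _ ≤ μ (⋃₀ maxEls X \ prunedUnion μ X n β j) + μ (⋃₀ maxEls X \ prunedUnion μ X n β j) :=
        add_le_add (mul_le_of_le_one_left' (ENNReal.ofReal_le_one.2 hβ))
          (ofReal_mul_measure_discardedUnion_le hX hmeas hpos j)
    _ = 2 * μ (⋃₀ maxEls X \ prunedUnion μ X n β j) := (two_mul _).symm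

theorem pow_mul_measure_diff_keptUnion_le (hβ : β ≤ 1) : ∀ j ≤ n,
    ENNReal.ofReal β ^ (j + 1) * μ (⋃₀ maxEls X \ keptUnion μ X n β j) ≤
      2 ^ (j + 1) * μ (⋃₀ maxEls X \ ⋃₀ gen n X)
  | 0, _ => by
    simpa [prunedUnion_zero] using ofReal_mul_measure_diff_keptUnion_le hX hmeas hpos hβ 0
  | j + 1, hj => calc
    ENNReal.ofReal β ^ (j + 2) * μ (⋃₀ maxEls X \ keptUnion μ X n β (j + 1))
      = ENNReal.ofReal β ^ (j + 1) *
          (ENNReal.ofReal β * μ (⋃₀ maxEls X \ keptUnion μ X n β (j + 1))) := by ring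
    _ ≤ ENNReal.ofReal β ^ (j + 1) * (2 * μ (⋃₀ maxEls X \ prunedUnion μ X n β (j + 1))) :=
        mul_le_mul_right (ofReal_mul_measure_diff_keptUnion_le hX hmeas hpos hβ _) _
    _ = 2 * (ENNReal.ofReal β ^ (j + 1) * μ (⋃₀ maxEls X \ keptUnion μ X n β j)) := by
        rw [prunedUnion_succ (by omega)]
        ring
    _ ≤ 2 * (2 ^ (j + 1) * μ (⋃₀ maxEls X \ ⋃₀ gen n X)) :=
        mul_le_mul_right (pow_mul_measure_diff_keptUnion_le hβ j (by omega)) _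
    _ = 2 ^ (j + 2) * μ (⋃₀ maxEls X \ ⋃₀ gen n X) := by ring

end Measure

theorem keptSubcollection_subset : keptSubcollection μ X n β ⊆ X := by
  rintro N ⟨⟨k, -, hN⟩, -⟩
  exact gen_subset hN

theorem gen_keptSubcollection (m : ℕ) :
    gen m (keptSubcollection μ X n β) = keptSubcollection μ X n β ∩ gen m X := by
  refine gen_eq_inter_of_forall_exists_parent (fun N hN => ?_) ?_ m
  · obtain ⟨⟨k, -, hNk⟩, -⟩ := hN
    exact ⟨k, hNk⟩
  rintro k N ⟨⟨k', hk'n, hNk'⟩, hanc⟩ hNk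
  obtain rfl := eq_of_mem_gen_of_mem_gen hNk' hNk
  obtain ⟨M, hM, hNM⟩ := exists_parent hNk
  exact ⟨M, ⟨⟨k, by omega, hM⟩, fun j M' hM' hMM' => hanc j M' hM' (hNM.subset.trans hMM')⟩,
    hM, hNM⟩

section Subcollection

variable (hX : Nested X) (hpos : ∀ N ∈ X, 0 < μ N)
include hX hpos

theorem pruned_subset_sUnion_gen_keptSubcollection : ∀ j ≤ n, ∀ N ∈ gen (n - j) X,
    AncestorsKept μ X n β N → pruned μ X n β j N ⊆ ⋃₀ gen n (keptSubcollection μ X n β)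
  | 0, _, N, hN, hanc => by
    rw [gen_keptSubcollection]
    exact subset_sUnion_of_mem ⟨⟨⟨n, le_rfl, hN⟩, hanc⟩, hN⟩
  | j + 1, hj, N, hN, hanc => by
    rw [pruned_succ]
    refine iUnion₂_subset fun M ⟨hM, hMN, hMkept⟩ =>
      pruned_subset_sUnion_gen_keptSubcollection j (by omega) M hM fun j' M' hM' hMM' => ?_
    obtain ⟨x, hx⟩ := nonempty_of_measure_ne_zero (hpos M (gen_subset hM)).ne'
    rcases le_or_gt j' (n - (j + 1)) with hj' | hj'
    · exact hanc j' M' hM' (hX.subset_of_mem_gen hN hM' hj' ⟨x, hMN hx, hMM' hx⟩)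
    · obtain rfl := subset_antisymm (hX.subset_of_mem_gen hM' hM (by omega) ⟨x, hMM' hx, hx⟩) hMM'
      obtain rfl := eq_of_mem_gen_of_mem_gen hM' hM
      rwa [show n - (n - j) = j by omega]

theorem keptUnion_subset_sUnion_gen_keptSubcollection :
    keptUnion μ X n β n ⊆ ⋃₀ gen n (keptSubcollection μ X n β) := by
  refine iUnion₂_subset fun M ⟨hM, hMkept⟩ =>
    pruned_subset_sUnion_gen_keptSubcollection hX hpos n le_rfl M hM fun j M' hM' hMM' => ?_
  rw [Nat.sub_self] at hM
  obtain ⟨x, hx⟩ := nonempty_of_measure_ne_zero (hpos M (gen_subset hM)).ne'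
  obtain rfl := subset_antisymm (hX.subset_of_mem_gen hM' hM j.zero_le ⟨x, hMM' hx, hx⟩) hMM'
  obtain rfl := eq_of_mem_gen_of_mem_gen hM' hM
  exact hMkept

theorem ofReal_mul_measure_le_measure_inter_sUnion_gen_keptSubcollection {N : Set ℝ}
    (hN : N ∈ keptSubcollection μ X n β) :
    ENNReal.ofReal (1 - β) * μ N ≤ μ (N ∩ ⋃₀ gen n (keptSubcollection μ X n β)) := by
  obtain ⟨⟨k, hkn, hNk⟩, hanc⟩ := hN
  calc ENNReal.ofReal (1 - β) * μ N ≤ μ (pruned μ X n β (n - k) N) := hanc k N hNk subset_rfl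
    _ ≤ μ (N ∩ ⋃₀ gen n (keptSubcollection μ X n β)) :=
      measure_mono (subset_inter (pruned_subset _ _)
        (pruned_subset_sUnion_gen_keptSubcollection hX hpos (n - k) (by omega) N
          (by rwa [show n - (n - k) = k by omega]) hanc))

end Subcollection

end Pruning

theorem ofReal_mul_lt_measure_of_measure_diff_le {Ω : Type*} [MeasurableSpace Ω] {μ : Measure Ω}
    {S T U : Set Ω} {a b K : ℝ} (hS : μ S ≠ ∞) (hTS : T ⊆ S) (hT : NullMeasurableSet T μ)
    (hb : 0 < b) (hK : 0 < K) (habK : a * K ≤ b)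
    (hST : ENNReal.ofReal (1 - a) * μ S < μ T)
    (hSU : ENNReal.ofReal b * μ (S \ U) ≤ ENNReal.ofReal K * μ (S \ T)) :
    ENNReal.ofReal (1 - a * K / b) * μ S < μ U := by
  rcases eq_or_ne (μ U) ∞ with hU | hU
  · rw [hU]
    exact ENNReal.mul_lt_top ENNReal.ofReal_lt_top hS.lt_top
  have hT' : μ T ≠ ∞ := ne_top_of_le_ne_top hS (measure_mono hTS)
  have hSU' : μ (S \ U) ≠ ∞ := ne_top_of_le_ne_top hS (measure_mono sdiff_subset)
  have hSdiffT : μ (S \ T) = μ S - μ T := measure_sdiff hTS hT hT'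
  have hs := ENNReal.toReal_nonneg (a := μ S)
  have hcaptured : (1 - a) * (μ S).toReal < (μ T).toReal := by
    have h := ENNReal.toReal_strict_mono hT' hST
    rw [ENNReal.toReal_mul, ENNReal.toReal_ofReal'] at h
    nlinarith [le_max_left (1 - a) 0]
  have hloss : b * (μ (S \ U)).toReal ≤ K * ((μ S).toReal - (μ T).toReal) := by
    have h := ENNReal.toReal_mono
      (ENNReal.mul_ne_top ENNReal.ofReal_ne_top (hSdiffT ▸ ENNReal.sub_ne_top hS)) hSU
    rwa [ENNReal.toReal_mul, ENNReal.toReal_mul, ENNReal.toReal_ofReal hb.le,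
      ENNReal.toReal_ofReal hK.le, hSdiffT, ENNReal.toReal_sub_of_le (measure_mono hTS) hS] at h
  have hcover : (μ S).toReal ≤ (μ (S \ U)).toReal + (μ U).toReal := by
    rw [← ENNReal.toReal_add hSU' hU]
    exact ENNReal.toReal_mono (ENNReal.add_ne_top.2 ⟨hSU', hU⟩)
      ((measure_mono (subset_sdiff_union S U)).trans (measure_union_le _ _))
  rw [← ENNReal.toReal_lt_toReal (ENNReal.mul_ne_top ENNReal.ofReal_ne_top hS) hU,
    ENNReal.toReal_mul, ENNReal.toReal_ofReal (by rwa [sub_nonneg, div_le_one hb])]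
  have h : b * ((μ S).toReal - (μ U).toReal) < a * K * (μ S).toReal := by nlinarith
  rw [sub_mul, sub_lt_comm, div_mul_eq_mul_div, one_mul, lt_div_iff₀ hb]
  linarith

theorem mul_two_pow_succ_lt_of_lt_two_rpow_mul {n : ℕ} {a c : ℝ}
    (h : a < 2 ^ (-(n : ℝ) - 1) * c) : a * 2 ^ (n + 1) < c := by
  have h2 : (2 : ℝ) ^ (-(n : ℝ) - 1) * 2 ^ (n + 1) = 1 := by
    rw [← Real.rpow_natCast, ← Real.rpow_add two_pos]
    norm_num
  calc a * 2 ^ (n + 1) < 2 ^ (-(n : ℝ) - 1) * c * 2 ^ (n + 1) := by gcongr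
    _ = c := by rw [mul_right_comm, h2, one_mul]

theorem comb_lemma_three_general (n : ℕ) (α β : ℝ)
    (hβ0 : 0 < β) (hβ1 : β < 1) (hα : α < 2 ^ (-(n : ℝ) - 1) * β ^ (n + 1))
    (𝒳 : Set (Set ℝ)) (hnested : Nested 𝒳)
    (hmeas : ∀ N ∈ 𝒳, MeasurableSet N ∧ 0 < volume N ∧ volume N < ⊤)
    (hyp : ENNReal.ofReal (1 - α) * volume (⋃₀ maxEls 𝒳) < volume (⋃₀ gen n 𝒳)) :
    ∃ 𝒴 ⊆ 𝒳,
      (ENNReal.ofReal (1 - α * 2 ^ (n + 1) / β ^ (n + 1)) * volume (⋃₀ maxEls 𝒳) <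
        volume (⋃₀ gen n 𝒴)) ∧
      ∀ N ∈ 𝒴, ENNReal.ofReal (1 - β) * volume N ≤ volume (N ∩ ⋃₀ gen n 𝒴) := by
  have hαβ := mul_two_pow_succ_lt_of_lt_two_rpow_mul hα
  have hα1 : α < 1 := by
    by_contra! h
    have h1 : 1 ≤ α * 2 ^ (n + 1) := one_le_mul_of_one_le_of_one_le h (one_le_pow₀ one_le_two)
    exact (pow_lt_one₀ hβ0.le hβ1 n.succ_ne_zero).not_ge (h1.trans hαβ.le)
  have hG0 : volume (⋃₀ maxEls 𝒳) ≠ ∞ := by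
    intro h
    rw [h, ENNReal.mul_top (by simpa using hα1)] at hyp
    exact not_top_lt hyp
  have hmeas' N hN := (hmeas N hN).1
  have hpos N hN := (hmeas N hN).2.1
  refine ⟨keptSubcollection volume 𝒳 n β, keptSubcollection_subset, ?_,
    fun N hN => ofReal_mul_measure_le_measure_inter_sUnion_gen_keptSubcollection hnested hpos hN⟩
  refine ofReal_mul_lt_measure_of_measure_diff_le hG0 sUnion_gen_subset_sUnion_maxEls
    (MeasurableSet.sUnion (countable_gen hnested hmeas' hpos n)
      fun N hN => hmeas' N (gen_subset hN)).nullMeasurableSet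
    (pow_pos hβ0 _) (by positivity) hαβ.le hyp ?_
  calc ENNReal.ofReal (β ^ (n + 1)) *
        volume (⋃₀ maxEls 𝒳 \ ⋃₀ gen n (keptSubcollection volume 𝒳 n β))
      ≤ ENNReal.ofReal β ^ (n + 1) * volume (⋃₀ maxEls 𝒳 \ keptUnion volume 𝒳 n β n) := by
        rw [ENNReal.ofReal_pow hβ0.le]
        gcongr
        exact keptUnion_subset_sUnion_gen_keptSubcollection hnested hpos
    _ ≤ 2 ^ (n + 1) * volume (⋃₀ maxEls 𝒳 \ ⋃₀ gen n 𝒳) :=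
        pow_mul_measure_diff_keptUnion_le hnested hmeas' hpos hβ1.le n le_rfl
    _ = ENNReal.ofReal (2 ^ (n + 1)) * volume (⋃₀ maxEls 𝒳 \ ⋃₀ gen n 𝒳) := by
        rw [ENNReal.ofReal_pow zero_le_two, ENNReal.ofReal_ofNat]

/-- Lemma `lem:comb-3` (monochromatic Jones argument): if `|G_n(𝒳)| > (1-α)|G₀(𝒳)|`, then
there is a subcollection `𝒴 ⊆ 𝒳` with `|G_n(𝒴)| > (1 - α·2^{n+1}/β^{n+1})|G₀(𝒳)|` and
`|N ∩ G_n(𝒴)| ≥ (1-β)|N|` for every `N ∈ 𝒴`. -/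
theorem comb_lemma_three (n : ℕ) (α β : ℝ)
    (hβ0 : 0 < β) (hβ1 : β < 1) (hα0 : 0 < α) (hα : α < 2 ^ (-(n : ℝ) - 1) * β ^ (n + 1))
    (𝒳 : Set (Set ℝ)) (hnested : Nested 𝒳)
    (hmeas : ∀ N ∈ 𝒳, MeasurableSet N ∧ 0 < volume N ∧ volume N < ⊤)
    (hyp : ENNReal.ofReal (1 - α) * volume (⋃₀ maxEls 𝒳) < volume (⋃₀ gen n 𝒳)) :
    ∃ 𝒴 ⊆ 𝒳,
      (ENNReal.ofReal (1 - α * 2 ^ (n + 1) / β ^ (n + 1)) * volume (⋃₀ maxEls 𝒳) <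
        volume (⋃₀ gen n 𝒴)) ∧
      ∀ N ∈ 𝒴, ENNReal.ofReal (1 - β) * volume N ≤ volume (N ∩ ⋃₀ gen n 𝒴) :=
  comb_lemma_three_general n α β hβ0 hβ1 hα 𝒳 hnested hmeas hyp
end

section
/- Let n, N ∈ ℕ₀ and suppose (ℬ_I : I ∈ 𝒟ⁿ) with ℬ_I ⊆ 𝒟^N satisfies Jones' compatibility conditions (J1)–(J4) with constant κ_J ≥ 1. Then the sets B_I = ⋃ℬ_I satisfy: B_{I₀} ⊆ B_I if and only if I₀ ⊆ I, for all I₀, I ∈ 𝒟ⁿ. -/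
/-!
Dyadic intervals are nested or disjoint, and one of level `k` contains at least two intervals of
each level `k' > k`. Suppose `B_{I₀} ⊆ B_I`. If `I₀` is at least as fine as `I` and `I₀ ⊄ I`, then
`I₀ ∩ I = ∅`; if `I₀` is coarser than `I`, it contains an interval `I' ≠ I` of the level of `I`,
so `I' ∩ I = ∅`. Either way (J3) gives a nonempty set (`B_{I₀}`, resp. `B_{I'} ⊆ B_{I₀}`) lying in
`B_I` and disjoint from it.
-/
open MeasureTheory

/-- Real-valued measure. -/
noncomputable def msr (s : Set ℝ) : ℝ := (volume s).toReal

/-- Jones' compatibility conditions (J1)–(J4) with constant `κ` for a family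
`(ℬ_I : I ∈ 𝒟ⁿ)` of collections `ℬ k j ⊆ 𝒩` indexed by the dyadic intervals of level `≤ n`.
(J1): `𝒩` consists of measurable sets of finite positive measure and is nested, and each
`ℬ k j` is finite;  (J2): each `ℬ k j` is nonempty and consists of pairwise disjoint sets,
and distinct indices give disjoint collections;  (J3): `B_{I₀} ∩ B_{I₁} = ∅` if
`I₀ ∩ I₁ = ∅` and `B_{I₀} ⊆ B_{I₁}` if `I₀ ⊆ I₁`, where `B_I = ⋃ℬ_I`;  (J4): for
`I₀ ⊆ I` and `N ∈ ℬ_I`, `|N ∩ B_{I₀}|/|N| ≥ κ⁻¹ |B_{I₀}|/|B_I|`. -/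
def JonesConds (n : ℕ) (𝒩 : Set (Set ℝ)) (ℬ : ℕ → ℕ → Set (Set ℝ)) (κ : ℝ) : Prop :=
  -- (J1)
  ((∀ N ∈ 𝒩, MeasurableSet N ∧ 0 < volume N ∧ volume N < ⊤) ∧
   (∀ N ∈ 𝒩, ∀ M ∈ 𝒩, (N ∩ M).Nonempty → N ⊆ M ∨ M ⊆ N) ∧
   (∀ k j, k ≤ n → j < 2 ^ k → (ℬ k j).Finite ∧ ℬ k j ⊆ 𝒩)) ∧
  -- (J2)
  ((∀ k j, k ≤ n → j < 2 ^ k → (ℬ k j).Nonempty ∧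
      ∀ N ∈ ℬ k j, ∀ M ∈ ℬ k j, N ≠ M → N ∩ M = ∅) ∧
   (∀ k j k' j', k ≤ n → j < 2 ^ k → k' ≤ n → j' < 2 ^ k' → (k, j) ≠ (k', j') →
      ℬ k j ∩ ℬ k' j' = ∅)) ∧
  -- (J3)
  ((∀ k j k' j', k ≤ n → j < 2 ^ k → k' ≤ n → j' < 2 ^ k' →
      dyadicSet k j ∩ dyadicSet k' j' = ∅ → (⋃₀ ℬ k j) ∩ (⋃₀ ℬ k' j') = ∅) ∧
   (∀ k j k' j', k ≤ n → j < 2 ^ k → k' ≤ n → j' < 2 ^ k' →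
      dyadicSet k j ⊆ dyadicSet k' j' → ⋃₀ ℬ k j ⊆ ⋃₀ ℬ k' j')) ∧
  -- (J4)
  (∀ k j k' j', k ≤ n → j < 2 ^ k → k' ≤ n → j' < 2 ^ k' →
      dyadicSet k j ⊆ dyadicSet k' j' → ∀ N ∈ ℬ k' j',
        msr (N ∩ ⋃₀ ℬ k j) / msr N ≥ κ⁻¹ * msr (⋃₀ ℬ k j) / msr (⋃₀ ℬ k' j'))

/-- The collection `𝒟^N` of dyadic intervals of level at most `N`. -/
def dyadics (N : ℕ) : Set (Set ℝ) :=
  {S | ∃ k j, k ≤ N ∧ j < 2 ^ k ∧ S = dyadicSet k j}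

lemma mem_dyadicSet_iff {k j : ℕ} {x : ℝ} : x ∈ dyadicSet k j ↔ 0 ≤ x ∧ ⌊x * 2 ^ k⌋₊ = j := by
  have h2k : (0 : ℝ) < 2 ^ k := by positivity
  simp only [dyadicSet, Set.mem_Ico, div_le_iff₀ h2k, lt_div_iff₀ h2k]
  constructor
  · rintro ⟨hl, hr⟩
    have hx : 0 ≤ x := by nlinarith [(Nat.cast_nonneg j : (0 : ℝ) ≤ j)]
    exact ⟨hx, (Nat.floor_eq_iff (by positivity)).2 ⟨hl, hr⟩⟩
  · rintro ⟨hx, hfloor⟩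
    exact (Nat.floor_eq_iff (by positivity)).1 hfloor

lemma dyadicSet_nonempty (k j : ℕ) : (dyadicSet k j).Nonempty :=
  Set.nonempty_Ico.2 (by gcongr; linarith)

lemma disjoint_dyadicSet_of_ne (k : ℕ) {j j' : ℕ} (h : j ≠ j') :
    Disjoint (dyadicSet k j) (dyadicSet k j') :=
  Set.disjoint_left.2 fun _ hx hx' =>
    h ((mem_dyadicSet_iff.1 hx).2.symm.trans (mem_dyadicSet_iff.1 hx').2)

lemma dyadicSet_subset_dyadicSet_div {k k' : ℕ} (h : k ≤ k') (j' : ℕ) :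
    dyadicSet k' j' ⊆ dyadicSet k (j' / 2 ^ (k' - k)) := by
  intro x hx
  obtain ⟨hx, hfloor⟩ := mem_dyadicSet_iff.1 hx
  refine mem_dyadicSet_iff.2 ⟨hx, ?_⟩
  have hscale : x * 2 ^ k = x * 2 ^ k' / ((2 ^ (k' - k) : ℕ) : ℝ) := by
    rw [Nat.cast_pow, Nat.cast_ofNat, ← Nat.add_sub_cancel' h, pow_add, Nat.add_sub_cancel_left]
    field_simp
  rw [hscale, Nat.floor_div_natCast, hfloor]

lemma dyadicSet_subset_or_disjoint {k k' : ℕ} (h : k ≤ k') (j j' : ℕ) :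
    dyadicSet k' j' ⊆ dyadicSet k j ∨ Disjoint (dyadicSet k' j') (dyadicSet k j) := by
  by_cases hj : j' / 2 ^ (k' - k) = j
  · exact Or.inl (hj ▸ dyadicSet_subset_dyadicSet_div h j')
  · exact Or.inr ((disjoint_dyadicSet_of_ne k hj).mono_left (dyadicSet_subset_dyadicSet_div h j'))

lemma exists_ne_dyadicSet_subset {k k' j : ℕ} (h : k < k') (hj : j < 2 ^ k) (j' : ℕ) :
    ∃ j'' < 2 ^ k', j'' ≠ j' ∧ dyadicSet k' j'' ⊆ dyadicSet k j := by
  set m := 2 ^ (k' - k) with hm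
  have hm2 : 2 ≤ m := Nat.le_self_pow (by omega) 2
  have hk' : 2 ^ k' = 2 ^ k * m := by rw [hm, ← pow_add, Nat.add_sub_cancel' h.le]
  have child : ∀ r < m, j * m + r < 2 ^ k' ∧ dyadicSet k' (j * m + r) ⊆ dyadicSet k j := by
    intro r hr
    refine ⟨by rw [hk']; nlinarith, ?_⟩
    have hdiv : (j * m + r) / m = j := by
      rw [add_comm, Nat.add_mul_div_right _ _ (by omega), Nat.div_eq_of_lt hr, zero_add]
    simpa only [← hm, hdiv] using dyadicSet_subset_dyadicSet_div h.le (j * m + r)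
  obtain ⟨r, hr, hne⟩ : ∃ r < m, j * m + r ≠ j' := by
    by_cases hj' : j' = j * m
    · exact ⟨1, by omega, by omega⟩
    · exact ⟨0, by omega, by omega⟩
  exact ⟨j * m + r, (child r hr).1, hne, (child r hr).2⟩

lemma dyadicSet_subset_of_subset {β : Type*} {n : ℕ} (B : ℕ → ℕ → Set β)
    (hne : ∀ k j, k ≤ n → j < 2 ^ k → (B k j).Nonempty)
    (hdisj : ∀ k j k' j', k ≤ n → j < 2 ^ k → k' ≤ n → j' < 2 ^ k' →
      dyadicSet k j ∩ dyadicSet k' j' = ∅ → B k j ∩ B k' j' = ∅)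
    (hmono : ∀ k j k' j', k ≤ n → j < 2 ^ k → k' ≤ n → j' < 2 ^ k' →
      dyadicSet k j ⊆ dyadicSet k' j' → B k j ⊆ B k' j')
    {k j k' j' : ℕ} (hk : k ≤ n) (hj : j < 2 ^ k) (hk' : k' ≤ n) (hj' : j' < 2 ^ k')
    (hB : B k j ⊆ B k' j') : dyadicSet k j ⊆ dyadicSet k' j' := by
  have not_subset_of_disjoint : ∀ a b a' b', a ≤ n → b < 2 ^ a → a' ≤ n → b' < 2 ^ a' →
      Disjoint (dyadicSet a b) (dyadicSet a' b') → ¬ B a b ⊆ B a' b' :=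
    fun a b a' b' ha hb ha' hb' hD hsub => (hne a b ha hb).ne_empty <| by
      rw [← Set.inter_eq_left.2 hsub]
      exact hdisj a b a' b' ha hb ha' hb' (Set.disjoint_iff_inter_eq_empty.1 hD)
  rcases le_or_gt k' k with hle | hlt
  · exact (dyadicSet_subset_or_disjoint hle j' j).resolve_right
      fun hD => not_subset_of_disjoint k j k' j' hk hj hk' hj' hD hB
  · obtain ⟨j'', hj'', hne'', hsub''⟩ := exists_ne_dyadicSet_subset hlt hj j'
    exact absurd ((hmono k' j'' k j hk' hj'' hk hj hsub'').trans hB)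
      (not_subset_of_disjoint k' j'' k' j' hk' hj'' hk' hj' (disjoint_dyadicSet_of_ne k' hne''))

lemma sUnion_nonempty_of_subset_dyadics {N : ℕ} {𝒮 : Set (Set ℝ)} (hne : 𝒮.Nonempty)
    (h : 𝒮 ⊆ dyadics N) : (⋃₀ 𝒮).Nonempty := by
  obtain ⟨S, hS⟩ := hne
  obtain ⟨k, j, -, -, rfl⟩ := h hS
  exact Set.nonempty_sUnion.2 ⟨_, hS, dyadicSet_nonempty k j⟩

theorem jones_subset_iff_general (n N : ℕ) (κ : ℝ)
    (ℬ : ℕ → ℕ → Set (Set ℝ)) (hJ : JonesConds n (dyadics N) ℬ κ) :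
    ∀ k j k' j', k ≤ n → j < 2 ^ k → k' ≤ n → j' < 2 ^ k' →
      (⋃₀ ℬ k j ⊆ ⋃₀ ℬ k' j' ↔ dyadicSet k j ⊆ dyadicSet k' j') := by
  obtain ⟨⟨-, -, hfin⟩, ⟨hJ2, -⟩, ⟨hdisj, hmono⟩, -⟩ := hJ
  have hne : ∀ k j, k ≤ n → j < 2 ^ k → (⋃₀ ℬ k j).Nonempty := fun k j hk hj =>
    sUnion_nonempty_of_subset_dyadics (hJ2 k j hk hj).1 (hfin k j hk hj).2
  intro k j k' j' hk hj hk' hj'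
  exact ⟨dyadicSet_subset_of_subset _ hne hdisj hmono hk hj hk' hj',
    hmono k j k' j' hk hj hk' hj'⟩

/-- Lemma 3.3 (ii): under Jones' conditions with `ℬ_I ⊆ 𝒟^N`, one has
`B_{I₀} ⊆ B_I` if and only if `I₀ ⊆ I`. -/
theorem jones_subset_iff (n N : ℕ) (κ : ℝ) (hκ : 1 ≤ κ)
    (ℬ : ℕ → ℕ → Set (Set ℝ)) (hJ : JonesConds n (dyadics N) ℬ κ) :
    ∀ k j k' j', k ≤ n → j < 2 ^ k → k' ≤ n → j' < 2 ^ k' →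
      (⋃₀ ℬ k j ⊆ ⋃₀ ℬ k' j' ↔ dyadicSet k j ⊆ dyadicSet k' j') :=
  jones_subset_iff_general n N κ ℬ hJ
end

section
/- Let L : ℓ^∞ → ℝ be a norm-one functional with L(1,1,1,...) = 1, and define Q : (∑_{n∈ℕ₀} SL^∞_n)_∞ → SL^∞ by (∑_{I∈𝒟ⁿ} a_{n,I} h_I)_{n=0}^∞ ↦ ∑_{I∈𝒟} L((a_{n,I})_{n=0}^∞) h_I, where a_{n,I} = 0 for |I| < 2^{−n}. Then ‖Q‖ ≤ 1: if sup_n ‖∑_I a_{n,I} h_I‖_{SL^∞} ≤ 1 then for every dyadic interval I₀, ∑_{I ⊇ I₀} L((a_{n,I})_n)² ≤ 1. -/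
open scoped ENNReal

/-! Set `c_k = L(x_k)` and `S = ∑ c_k²`. By Cauchy–Schwarz in each coordinate, the vector
`v = ∑ c_k x_k ∈ ℓ^∞` has norm at most `√S`, while `L v = S`. Hence `S ≤ ‖L‖ ‖v‖ ≤ √S`,
so `S ≤ 1`. -/

namespace lp

variable {ι κ : Type*}

theorem norm_sum_smul_le_sqrt_sum_sq (s : Finset κ) (c : κ → ℝ)
    (x : κ → lp (fun _ : ι => ℝ) ∞) (hx : ∀ n, ∑ k ∈ s, x k n ^ 2 ≤ 1) :
    ‖∑ k ∈ s, c k • x k‖ ≤ √(∑ k ∈ s, c k ^ 2) := by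
  refine norm_le_of_forall_le (Real.sqrt_nonneg _) fun n => ?_
  have hcoord : (∑ k ∈ s, c k • x k) n = ∑ k ∈ s, c k * x k n := by
    simp only [coeFn_sum, Finset.sum_apply, coeFn_smul, Pi.smul_apply, smul_eq_mul]
  have hsq : (∑ k ∈ s, c k * x k n) ^ 2 ≤ ∑ k ∈ s, c k ^ 2 :=
    calc (∑ k ∈ s, c k * x k n) ^ 2
        ≤ (∑ k ∈ s, c k ^ 2) * ∑ k ∈ s, x k n ^ 2 := Finset.sum_mul_sq_le_sq_mul_sq s _ _
      _ ≤ ∑ k ∈ s, c k ^ 2 :=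
          mul_le_of_le_one_right (Finset.sum_nonneg fun _ _ => sq_nonneg _) (hx n)
  rw [hcoord, Real.norm_eq_abs, ← Real.sqrt_sq_eq_abs]
  exact Real.sqrt_le_sqrt hsq

theorem sum_sq_apply_le_one (L : lp (fun _ : ι => ℝ) ∞ →L[ℝ] ℝ) (hL : ‖L‖ ≤ 1)
    (s : Finset κ) (x : κ → lp (fun _ : ι => ℝ) ∞) (hx : ∀ n, ∑ k ∈ s, x k n ^ 2 ≤ 1) :
    ∑ k ∈ s, L (x k) ^ 2 ≤ 1 := by
  set S := ∑ k ∈ s, L (x k) ^ 2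
  have hS : 0 ≤ S := Finset.sum_nonneg fun _ _ => sq_nonneg _
  have hLv : L (∑ k ∈ s, L (x k) • x k) = S := by
    simp only [map_sum, map_smul, smul_eq_mul, S, sq]
  have hS_le_sqrt : S ≤ √S :=
    calc S = L (∑ k ∈ s, L (x k) • x k) := hLv.symm
      _ ≤ ‖L‖ * ‖∑ k ∈ s, L (x k) • x k‖ := (le_abs_self _).trans (L.le_opNorm _)
      _ ≤ 1 * √S := mul_le_mul hL (norm_sum_smul_le_sqrt_sum_sq s _ x hx)
          (norm_nonneg _) zero_le_one
      _ = √S := one_mul _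
  nlinarith [Real.sq_sqrt hS, Real.sqrt_nonneg S]

end lp

theorem Q_operator_norm_le_one_general
    (L : lp (fun _ : ℕ => ℝ) ∞ →L[ℝ] ℝ) (hL : ‖L‖ = 1)
    (a : ℕ → ℕ → ℕ → ℝ)
    (hnorm : ∀ n k₀ j₀, j₀ < 2 ^ k₀ →
      ∑ k ∈ Finset.range (k₀ + 1), (a n k (j₀ / 2 ^ (k₀ - k))) ^ 2 ≤ 1)
    (A : ℕ → ℕ → lp (fun _ : ℕ => ℝ) ∞)
    (hA : ∀ k j m, A k j m = a m k j) :
    ∀ k₀ j₀, j₀ < 2 ^ k₀ →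
      ∑ k ∈ Finset.range (k₀ + 1), (L (A k (j₀ / 2 ^ (k₀ - k)))) ^ 2 ≤ 1 := by
  intro k₀ j₀ hj₀
  refine lp.sum_sq_apply_le_one L hL.le _ _ fun n => ?_
  simpa only [hA] using hnorm n k₀ j₀ hj₀

/-- The operator `Q : (∑_n SL^∞_n)_∞ → SL^∞` built from a norm-one functional
`L : ℓ^∞ → ℝ` with `L(1,1,1,…) = 1`, sending `(∑_{I∈𝒟ⁿ} a_{n,I} h_I)_n` to
`∑_{I∈𝒟} L((a_{n,I})_n) h_I`, has norm at most `1`: if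
`sup_n ‖∑_I a_{n,I} h_I‖_{SL^∞} ≤ 1` — that is, every chain sum
`∑_{I ⊇ I₀} a_{n,I}² ≤ 1` — then for every dyadic interval `I₀ = (k₀, j₀)`,
`∑_{I ⊇ I₀} L((a_{n,I})_n)² ≤ 1`.  (The ancestor of `I₀` at level `k ≤ k₀` is the
interval with position `j₀ / 2^{k₀-k}`; `A k j ∈ ℓ^∞` is the sequence `(a_{n,I})_n` for
`I = (k, j)`.) -/
theorem Q_operator_norm_le_one
    (L : lp (fun _ : ℕ => ℝ) ∞ →L[ℝ] ℝ) (hL : ‖L‖ = 1)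
    (one : lp (fun _ : ℕ => ℝ) ∞) (hone : ∀ n : ℕ, one n = 1) (hL1 : L one = 1)
    (a : ℕ → ℕ → ℕ → ℝ)
    (hsupp : ∀ n k j, n < k → a n k j = 0)
    (hnorm : ∀ n k₀ j₀, j₀ < 2 ^ k₀ →
      ∑ k ∈ Finset.range (k₀ + 1), (a n k (j₀ / 2 ^ (k₀ - k))) ^ 2 ≤ 1)
    (A : ℕ → ℕ → lp (fun _ : ℕ => ℝ) ∞)
    (hA : ∀ k j m, A k j m = a m k j) :
    ∀ k₀ j₀, j₀ < 2 ^ k₀ →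
      ∑ k ∈ Finset.range (k₀ + 1), (L (A k (j₀ / 2 ^ (k₀ - k)))) ^ 2 ≤ 1 :=
  Q_operator_norm_le_one_general L hL a hnorm A hA
end
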